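/- arXiv:2003.00276 — 8 statements merged into one kernel-verified Lean document; each statement's English description precedes it below -/
import Mathlib

section
/- Let M ≥ 1. Let ν and ν' be probability measures on Ω all of whose M-th order absolute moments are finite, and let V, V' : (Fin K → ℝ) → ℝ be (M+1)-times continuously differentiable on a neighborhood of the origin. Assume: (nonvanishing derivatives) for every γ : Fin (M+1) → Fin K, ∂_γ V(0) ≠ 0 and ∂_γ V'(0) ≠ 0; (relevance) for every γ : Fin M → Fin K there exists ξ with ξ m : Fin (d (γ m)) for each m such that moment_ν(τ) ≠ 0 for the M-tuple τ m = ⟨γ m, ξ m⟩, and likewise for ν'; (scale) letting τ* be the M-tuple all of whose entries are (good 0, characteristic 0), moment_ν(τ*) = moment_{ν'}(τ*) ≠ 0; (observational equivalence) for every M-tuple τ and every good k, ∂_{(γ_τ,k)} V(0) · moment_ν(τ) = ∂_{(γ_τ,k)} V'(0) · moment_{ν'}(τ). Then moment_ν(τ) = moment_{ν'}(τ) for every M-tuple τ, and ∂_γ V(0) = ∂_γ V'(0) for every γ : Fin (M+1) → Fin K. (Theorem 1: identification of M-th order moments of random coefficients and of the (M+1)-st order derivatives of the integrated indirect utility at 0.)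 -/
open MeasureTheory Fin

/-- directional partial derivative along coordinate `k`. -/
noncomputable def pdd {K : ℕ} (f : (Fin K → ℝ) → ℝ) (k : Fin K) : (Fin K → ℝ) → ℝ :=
  fun x => fderiv ℝ f x (Pi.single k 1)

/-- iterated directional derivative, peeling from the right. -/
noncomputable def itD {K : ℕ} : ∀ (n : ℕ), ((Fin K → ℝ) → ℝ) → (Fin n → Fin K) → ((Fin K → ℝ) → ℝ)
  | 0, f, _ => f
  | n+1, f, γ => itD n (pdd f (γ (Fin.last n))) (Fin.init γ)

theorem pdd_contDiffOn {K n : ℕ} {U : Set (Fin K → ℝ)} (hU : IsOpen U)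
    {f : (Fin K → ℝ) → ℝ} (hf : ContDiffOn ℝ (n+1) f U) (k : Fin K) :
    ContDiffOn ℝ n (pdd f k) U := by
  have h1 : ContDiffOn ℝ n (fun y => fderiv ℝ f y) U :=
    hf.fderiv_of_isOpen hU (by exact_mod_cast le_rfl)
  exact h1.clm_apply contDiffOn_const

theorem itD_spec {K : ℕ} {U : Set (Fin K → ℝ)} (hU : IsOpen U) :
    ∀ (n : ℕ) (f : (Fin K → ℝ) → ℝ), ContDiffOn ℝ n f U →
      ∀ (γ : Fin n → Fin K) (x : _), x ∈ U →
      iteratedFDeriv ℝ n f x (fun i => Pi.single (γ i) 1) = itD n f γ x := by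
  intro n
  induction n with
  | zero => intro f _ γ x _; simp [itD]
  | succ n ih =>
    intro f hf γ x hx
    rw [iteratedFDeriv_succ_apply_right]
    have h1 : ContDiffOn ℝ n (fun y => fderiv ℝ f y) U :=
      hf.fderiv_of_isOpen hU (by exact_mod_cast le_rfl)
    set v : Fin K → ℝ := Pi.single (γ (Fin.last n)) 1 with hv
    set ev : ((Fin K → ℝ) →L[ℝ] ℝ) →L[ℝ] ℝ := ContinuousLinearMap.apply ℝ ℝ v with hev
    have h2 := ev.iteratedFDerivWithin_comp_left (h1 x hx) hU.uniqueDiffOn hx (le_refl ((n:ℕ) : WithTop ℕ∞))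
    have h3 : (ev ∘ fun y => fderiv ℝ f y) = pdd f (γ (Fin.last n)) := rfl
    rw [h3] at h2
    have h4 : iteratedFDerivWithin ℝ n (pdd f (γ (Fin.last n))) U x
        = iteratedFDeriv ℝ n (pdd f (γ (Fin.last n))) x := iteratedFDerivWithin_of_isOpen n hU hx
    have h5 : iteratedFDerivWithin ℝ n (fun y => fderiv ℝ f y) U x
        = iteratedFDeriv ℝ n (fun y => fderiv ℝ f y) x := iteratedFDerivWithin_of_isOpen n hU hx
    rw [h4, h5] at h2
    set w : Fin n → (Fin K → ℝ) := Fin.init (fun i : Fin (n+1) => (Pi.single (γ i) (1:ℝ) : Fin K → ℝ)) with hw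
    have h6 : iteratedFDeriv ℝ n (fun y => fderiv ℝ f y) x w v
        = iteratedFDeriv ℝ n (pdd f (γ (Fin.last n))) x w := by
      rw [h2]; rfl
    have h7 : w = fun i : Fin n => Pi.single ((Fin.init γ) i) (1:ℝ) := rfl
    rw [h6, h7]
    exact ih _ (pdd_contDiffOn hU hf _) (Fin.init γ) x hx

theorem itD_congr {K : ℕ} {U : Set (Fin K → ℝ)} (hU : IsOpen U) :
    ∀ (n : ℕ) (f g : (Fin K → ℝ) → ℝ), (∀ y ∈ U, f y = g y) →
      ∀ (γ : Fin n → Fin K), ∀ y ∈ U, itD n f γ y = itD n g γ y := by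
  intro n
  induction n with
  | zero => intro f g h γ y hy; exact h y hy
  | succ n ih =>
    intro f g h γ y hy
    have hp : ∀ k, ∀ z ∈ U, pdd f k z = pdd g k z := by
      intro k z hz
      have : f =ᶠ[nhds z] g := Filter.eventually_of_mem (hU.mem_nhds hz) h
      simp only [pdd, this.fderiv_eq]
    exact ih _ _ (hp (γ (Fin.last n))) (Fin.init γ) y hy

theorem pdd_comm {K : ℕ} {U : Set (Fin K → ℝ)} (hU : IsOpen U)
    {f : (Fin K → ℝ) → ℝ} (hf : ContDiffOn ℝ 2 f U) (a b : Fin K)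
    {x : Fin K → ℝ} (hx : x ∈ U) : pdd (pdd f a) b x = pdd (pdd f b) a x := by
  have hat : ContDiffAt ℝ 2 f x := hf.contDiffAt (hU.mem_nhds hx)
  have hsym := hat.isSymmSndFDerivAt (by simp)
  have hdiff : DifferentiableAt ℝ (fderiv ℝ f) x :=
    (hat.fderiv_right (m := 1) (by norm_num)).differentiableAt one_ne_zero
  have key : ∀ u v : Fin K → ℝ,
      fderiv ℝ (fun y => fderiv ℝ f y u) x v = fderiv ℝ (fderiv ℝ f) x v u := by
    intro u v
    rw [fderiv_clm_apply hdiff (differentiableAt_const u)]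
    simp
  show fderiv ℝ (fun y => fderiv ℝ f y (Pi.single a 1)) x (Pi.single b 1)
      = fderiv ℝ (fun y => fderiv ℝ f y (Pi.single b 1)) x (Pi.single a 1)
  rw [key, key]
  exact hsym.eq _ _

theorem itD_two {K : ℕ} (n : ℕ) (f : (Fin K → ℝ) → ℝ) (γ : Fin (n+2) → Fin K) :
    itD (n+2) f γ = itD n (pdd (pdd f (γ (Fin.last (n+1)))) (γ ⟨n, by omega⟩))
      (fun i : Fin n => γ ⟨i, by omega⟩) := rfl

theorem itD_adj {K : ℕ} {U : Set (Fin K → ℝ)} (hU : IsOpen U) :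
    ∀ (n : ℕ) (f : (Fin K → ℝ) → ℝ), ContDiffOn ℝ (n+2) f U →
    ∀ (γ γ' : Fin (n+2) → Fin K) (j : ℕ) (hj : j + 1 ≤ n + 1),
    (∀ i : Fin (n+2), (i:ℕ) ≠ j → (i:ℕ) ≠ j+1 → γ i = γ' i) →
    γ ⟨j, by omega⟩ = γ' ⟨j+1, by omega⟩ →
    γ ⟨j+1, by omega⟩ = γ' ⟨j, by omega⟩ →
    ∀ y ∈ U, itD (n+2) f γ y = itD (n+2) f γ' y := by
  intro n
  induction n with
  | zero =>
    intro f hf γ γ' j hj hne h1 h2 y hy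
    obtain rfl : j = 0 := by omega
    rw [itD_two, itD_two]
    show pdd (pdd f (γ 1)) (γ 0) y = pdd (pdd f (γ' 1)) (γ' 0) y
    rw [show γ (1 : Fin 2) = γ' 0 from h2, show γ (0 : Fin 2) = γ' 1 from h1]
    exact pdd_comm hU (hf.of_le (by exact_mod_cast le_rfl)) _ _ hy
  | succ n ih =>
    intro f hf γ γ' j hj hne h1 h2 y hy
    rcases Nat.lt_or_ge (j+1) (n+2) with hlt | hge
    · -- swap does not involve the last position
      show itD (n+2) (pdd f (γ (Fin.last (n+2)))) (Fin.init γ) y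
          = itD (n+2) (pdd f (γ' (Fin.last (n+2)))) (Fin.init γ') y
      have hlast : γ (Fin.last (n+2)) = γ' (Fin.last (n+2)) := by
        apply hne <;> simp <;> omega
      rw [hlast]
      refine ih _ (pdd_contDiffOn hU (by exact_mod_cast hf) _) _ _ j (by omega) ?_ ?_ ?_ y hy
      · intro i hi1 hi2
        exact hne i.castSucc (by simpa using hi1) (by simpa using hi2)
      · exact h1
      · exact h2
    · -- j = n+1 : swap the last two positions
      have hjv : j = n + 1 := by omega
      subst hjv
      rw [itD_two, itD_two]
      have e1 : γ (Fin.last (n+2)) = γ' ⟨n+1, by omega⟩ := h2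
      have e2 : γ ⟨n+1, by omega⟩ = γ' (Fin.last (n+2)) := h1
      have e3 : (fun i : Fin (n+1) => γ ⟨i, by omega⟩) = fun i : Fin (n+1) => γ' ⟨i, by omega⟩ := by
        funext i
        exact hne ⟨i, by omega⟩ (by simp; omega) (by simp; omega)
      rw [e1, e2, e3]
      refine itD_congr hU _ _ _ ?_ _ y hy
      intro z hz
      exact pdd_comm hU (hf.of_le (by exact_mod_cast (by omega : 2 ≤ n + 3))) _ _ hz
theorem snoc_mk_lt {α : Sort*} {m : ℕ} (γ : Fin m → α) (k : α) (i : ℕ) (h : i < m)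
    (h2 : i < m + 1) : (Fin.snoc γ k : Fin (m+1) → α) ⟨i, h2⟩ = γ ⟨i, h⟩ := by
  have e : (⟨i, h2⟩ : Fin (m+1)) = Fin.castSucc ⟨i, h⟩ := rfl
  rw [e, Fin.snoc_castSucc]

theorem snoc_mk_last {α : Sort*} {m : ℕ} (γ : Fin m → α) (k : α) (h2 : m < m + 1) :
    (Fin.snoc γ k : Fin (m+1) → α) ⟨m, h2⟩ = k := by
  have e : (⟨m, h2⟩ : Fin (m+1)) = Fin.last m := rfl
  rw [e, Fin.snoc_last]

/-- swap the entries at positions `i` and `i+1`. -/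
def swp {α : Sort*} {m : ℕ} (γ : Fin m → α) (i : ℕ) (h : i + 1 < m) : Fin m → α :=
  fun x => if (x : ℕ) = i then γ ⟨i+1, h⟩ else if (x : ℕ) = i + 1 then γ ⟨i, by omega⟩ else γ x

/-- The space of coefficient / covariate vectors: one vector of characteristics per good. -/
abbrev Coeff (K : ℕ) (d : Fin K → ℕ) := ∀ k : Fin K, Fin (d k) → ℝ

/-- Iterated partial derivative of `V` at the origin along coordinate directions `γ 0, …, γ (n-1)`. -/
noncomputable def dV {K : ℕ} (n : ℕ) (V : (Fin K → ℝ) → ℝ) (γ : Fin n → Fin K) : ℝ :=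
  iteratedFDeriv ℝ n V 0 fun i => Pi.single (γ i) 1

/-- The `M`-th order moment of a measure `ν` on coefficient space at the tuple `τ` of
(good, characteristic) pairs. -/
noncomputable def moment {K : ℕ} {d : Fin K → ℕ} {M : ℕ}
    (ν : Measure (Coeff K d)) (τ : Fin M → Σ k : Fin K, Fin (d k)) : ℝ :=
  ∫ β, ∏ m : Fin M, β (τ m).1 (τ m).2 ∂ν

/-- Theorem 1: identification of `M`-th order moments of random coefficients and of the
`(M+1)`-st order derivatives of the integrated indirect utility at `0`. -/
theorem stmt0 {K : ℕ} (hK : 0 < K) {d : Fin K → ℕ} (hd : ∀ k, 0 < d k)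
    (M : ℕ) (hM : 1 ≤ M)
    (ν ν' : Measure (Coeff K d)) [IsProbabilityMeasure ν] [IsProbabilityMeasure ν']
    (hνmom : ∀ τ : Fin M → Σ k : Fin K, Fin (d k),
      Integrable (fun β => ∏ m : Fin M, |β (τ m).1 (τ m).2|) ν)
    (hν'mom : ∀ τ : Fin M → Σ k : Fin K, Fin (d k),
      Integrable (fun β => ∏ m : Fin M, |β (τ m).1 (τ m).2|) ν')
    (V V' : (Fin K → ℝ) → ℝ)
    (hV : ContDiffAt ℝ (M + 1) V 0) (hV' : ContDiffAt ℝ (M + 1) V' 0)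
    (hVne : ∀ γ : Fin (M + 1) → Fin K, dV (M + 1) V γ ≠ 0)
    (hV'ne : ∀ γ : Fin (M + 1) → Fin K, dV (M + 1) V' γ ≠ 0)
    (hrel : ∀ γ : Fin M → Fin K, ∃ ξ : ∀ m, Fin (d (γ m)),
      moment ν (fun m => ⟨γ m, ξ m⟩) ≠ 0)
    (hrel' : ∀ γ : Fin M → Fin K, ∃ ξ : ∀ m, Fin (d (γ m)),
      moment ν' (fun m => ⟨γ m, ξ m⟩) ≠ 0)
    (hscale : moment ν (fun _ : Fin M => ⟨⟨0, hK⟩, ⟨0, hd ⟨0, hK⟩⟩⟩)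
      = moment ν' (fun _ : Fin M => ⟨⟨0, hK⟩, ⟨0, hd ⟨0, hK⟩⟩⟩))
    (hscale0 : moment ν (fun _ : Fin M => ⟨⟨0, hK⟩, ⟨0, hd ⟨0, hK⟩⟩⟩) ≠ 0)
    (hobs : ∀ (τ : Fin M → Σ k : Fin K, Fin (d k)) (k : Fin K),
      dV (M + 1) V (Fin.snoc (fun m => (τ m).1) k) * moment ν τ
        = dV (M + 1) V' (Fin.snoc (fun m => (τ m).1) k) * moment ν' τ) :
    (∀ τ : Fin M → Σ k : Fin K, Fin (d k), moment ν τ = moment ν' τ) ∧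
    (∀ γ : Fin (M + 1) → Fin K, dV (M + 1) V γ = dV (M + 1) V' γ) := by
  obtain ⟨M', rfl⟩ : ∃ M', M = M' + 1 := ⟨M - 1, by omega⟩
  -- a common open neighborhood of 0 on which V and V' are C^{M+1}
  obtain ⟨u, hu, hVu⟩ := hV.contDiffOn le_rfl (by simp)
  obtain ⟨u', hu', hV'u⟩ := hV'.contDiffOn le_rfl (by simp)
  obtain ⟨U, hUu, hUopen, hU0⟩ := mem_nhds_iff.mp hu
  obtain ⟨U', hU'u, hU'open, hU'0⟩ := mem_nhds_iff.mp hu'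
  set W := U ∩ U' with hWdef
  have hW : IsOpen W := hUopen.inter hU'open
  have hW0 : (0 : Fin K → ℝ) ∈ W := ⟨hU0, hU'0⟩
  have hVW : ContDiffOn ℝ ((M' + 2 : ℕ) : WithTop ℕ∞) V W := by
    have := hVu.mono (show W ⊆ u from fun x hx => hUu hx.1)
    exact_mod_cast this
  have hV'W : ContDiffOn ℝ ((M' + 2 : ℕ) : WithTop ℕ∞) V' W := by
    have := hV'u.mono (show W ⊆ u' from fun x hx => hU'u hx.2)
    exact_mod_cast this
  -- dV as iterated directional derivative, and adjacent-transposition symmetry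
  have hdVe : ∀ (g : (Fin K → ℝ) → ℝ), ContDiffOn ℝ ((M' + 2 : ℕ) : WithTop ℕ∞) g W →
      ∀ γ : Fin (M' + 2) → Fin K, dV (M' + 2) g γ = itD (M' + 2) g γ 0 :=
    fun g hg γ => itD_spec hW (M' + 2) g hg γ 0 hW0
  have hadj : ∀ (g : (Fin K → ℝ) → ℝ), ContDiffOn ℝ ((M' + 2 : ℕ) : WithTop ℕ∞) g W →
      ∀ (γ γ' : Fin (M' + 2) → Fin K) (j : ℕ) (hj : j + 1 ≤ M' + 1),
      (∀ i : Fin (M' + 2), (i : ℕ) ≠ j → (i : ℕ) ≠ j + 1 → γ i = γ' i) →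
      γ ⟨j, by omega⟩ = γ' ⟨j + 1, by omega⟩ → γ ⟨j + 1, by omega⟩ = γ' ⟨j, by omega⟩ →
      dV (M' + 2) g γ = dV (M' + 2) g γ' := by
    intro g hg γ γ' j hj hne h1 h2
    rw [hdVe g hg γ, hdVe g hg γ']
    exact itD_adj hW M' g hg γ γ' j hj hne h1 h2 0 hW0
  clear hdVe hW0 hW hWdef hU0 hU'0 hUu hU'u hUopen hU'open hVu hV'u hu hu'
  -- normalize the arithmetic in the statement
  set k0 : Fin K := ⟨0, hK⟩ with hk0
  have hobs2 : ∀ (τ : Fin (M' + 1) → Σ k : Fin K, Fin (d k)) (k : Fin K),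
      dV (M' + 2) V (Fin.snoc (fun m => (τ m).1) k) * moment ν τ
        = dV (M' + 2) V' (Fin.snoc (fun m => (τ m).1) k) * moment ν' τ := hobs
  have hVne2 : ∀ γ : Fin (M' + 2) → Fin K, dV (M' + 2) V γ ≠ 0 := hVne
  have hV'ne2 : ∀ γ : Fin (M' + 2) → Fin K, dV (M' + 2) V' γ ≠ 0 := hV'ne
  -- the ratio function c, via choice of relevant moment tuples
  set τw : (Fin (M' + 1) → Fin K) → (Fin (M' + 1) → Σ k : Fin K, Fin (d k)) :=
    fun γ m => ⟨γ m, (hrel γ).choose m⟩ with hτw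
  have hτne : ∀ γ, moment ν (τw γ) ≠ 0 := fun γ => (hrel γ).choose_spec
  set c : (Fin (M' + 1) → Fin K) → ℝ := fun γ => moment ν' (τw γ) / moment ν (τw γ) with hcdef
  have hc : ∀ (γ : Fin (M' + 1) → Fin K) (k : Fin K),
      dV (M' + 2) V (Fin.snoc γ k) = c γ * dV (M' + 2) V' (Fin.snoc γ k) := by
    intro γ k
    have h := hobs2 (τw γ) k
    have hgood : (fun m => ((τw γ) m).1) = γ := rfl
    rw [hgood] at h
    rw [hcdef]
    rw [div_mul_eq_mul_div, eq_div_iff (hτne γ)]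
    linear_combination h
  have hcne : ∀ γ, c γ ≠ 0 := by
    intro γ h0
    have h := hc γ k0
    rw [h0, zero_mul] at h
    exact hVne2 _ h
  have hm' : ∀ τ : Fin (M' + 1) → Σ k : Fin K, Fin (d k),
      moment ν' τ = c (fun m => (τ m).1) * moment ν τ := by
    intro τ
    have h := hobs2 τ k0
    rw [hc (fun m => (τ m).1) k0] at h
    refine mul_left_cancel₀ (hV'ne2 (Fin.snoc (fun m => (τ m).1) k0)) ?_
    linear_combination -h
  -- generic swap invariance of c
  have hceq : ∀ (γ γ'' : Fin (M' + 1) → Fin K) (k k'' : Fin K) (j : ℕ) (hj : j + 1 ≤ M' + 1),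
      (∀ i : Fin (M' + 2), (i : ℕ) ≠ j → (i : ℕ) ≠ j + 1 →
        (Fin.snoc γ k : Fin (M' + 2) → Fin K) i = (Fin.snoc γ'' k'' : Fin (M' + 2) → Fin K) i) →
      (Fin.snoc γ k : Fin (M' + 2) → Fin K) ⟨j, by omega⟩
        = (Fin.snoc γ'' k'' : Fin (M' + 2) → Fin K) ⟨j + 1, by omega⟩ →
      (Fin.snoc γ k : Fin (M' + 2) → Fin K) ⟨j + 1, by omega⟩
        = (Fin.snoc γ'' k'' : Fin (M' + 2) → Fin K) ⟨j, by omega⟩ →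
      c γ = c γ'' := by
    intro γ γ'' k k'' j hj hne h1 h2
    have hVeq := hadj V hVW (Fin.snoc γ k) (Fin.snoc γ'' k'') j hj hne h1 h2
    have hV'eq := hadj V' hV'W (Fin.snoc γ k) (Fin.snoc γ'' k'') j hj hne h1 h2
    rw [hc γ k, hc γ'' k'', hV'eq] at hVeq
    exact mul_right_cancel₀ (hV'ne2 _) hVeq
  -- invariance under an adjacent swap inside γ
  have cswp : ∀ (γ : Fin (M' + 1) → Fin K) (i : ℕ) (h : i + 1 < M' + 1),
      c (swp γ i h) = c γ := by
    intro γ i h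
    refine (hceq γ (swp γ i h) k0 k0 i (by omega) ?_ ?_ ?_).symm
    · rintro ⟨iv, hiv⟩ hi1 hi2
      simp only [] at hi1 hi2
      by_cases hlast : iv = M' + 1
      · subst hlast
        rw [snoc_mk_last, snoc_mk_last]
      · have hlt : iv < M' + 1 := by omega
        rw [snoc_mk_lt _ _ iv hlt, snoc_mk_lt _ _ iv hlt]
        simp [swp, hi1, hi2]
    · have hlt1 : i < M' + 1 := by omega
      rw [snoc_mk_lt _ _ i hlt1, snoc_mk_lt _ _ (i + 1) h]
      simp [swp]
    · rw [snoc_mk_lt _ _ (i + 1) h, snoc_mk_lt _ _ i (by omega)]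
      simp [swp]
  -- invariance under updating the last coordinate
  have clast : ∀ (γ : Fin (M' + 1) → Fin K) (a : Fin K),
      c (Function.update γ ⟨M', by omega⟩ a) = c γ := by
    intro γ a
    refine (hceq γ (Function.update γ ⟨M', by omega⟩ a) a (γ ⟨M', by omega⟩) M' le_rfl ?_ ?_ ?_).symm
    · rintro ⟨iv, hiv⟩ hi1 hi2
      simp only [] at hi1 hi2
      have hlt : iv < M' + 1 := by omega
      rw [snoc_mk_lt _ _ iv hlt, snoc_mk_lt _ _ iv hlt]
      rw [Function.update_of_ne (by exact fun hh => hi1 (by simpa using congrArg Fin.val hh))]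
    · rw [snoc_mk_lt _ _ M' (by omega), snoc_mk_last]
    · rw [snoc_mk_last, snoc_mk_lt _ _ M' (by omega)]
      rw [Function.update_self]
  -- invariance under updating any coordinate
  have hupd : ∀ (t i : ℕ) (hi : i < M' + 1), M' - i ≤ t → ∀ (γ : Fin (M' + 1) → Fin K) (a : Fin K),
      c (Function.update γ ⟨i, hi⟩ a) = c γ := by
    intro t
    induction t with
    | zero =>
      intro i hi hle γ a
      obtain rfl : i = M' := by omega
      exact clast γ a
    | succ t ih =>
      intro i hi hle γ a
      by_cases hiM : i = M'
      · subst hiM; exact clast γ a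
      · have h : i + 1 < M' + 1 := by omega
        have e : Function.update γ ⟨i, hi⟩ a
            = swp (Function.update (swp γ i h) ⟨i + 1, h⟩ a) i h := by
          funext m
          rcases m with ⟨mv, hm⟩
          by_cases h1 : mv = i
          · subst h1
            simp [swp, Function.update, Fin.mk.injEq]
          · by_cases h2 : mv = i + 1
            · subst h2
              simp [swp, Function.update, Fin.mk.injEq]
            · simp [swp, Function.update, Fin.mk.injEq, h1, h2]
        rw [e, cswp, ih (i + 1) h (by omega), cswp]
  -- c is constant
  have hP : ∀ (t : ℕ) (γ : Fin (M' + 1) → Fin K),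
      (∀ i : Fin (M' + 1), t ≤ (i : ℕ) → γ i = k0) → c γ = c (fun _ => k0) := by
    intro t
    induction t with
    | zero =>
      intro γ hγ
      have : γ = fun _ => k0 := funext fun i => hγ i (Nat.zero_le _)
      rw [this]
    | succ t ih =>
      intro γ hγ
      by_cases ht : t < M' + 1
      · have h2 := hupd M' t ht (by omega) γ k0
        have h3 := ih (Function.update γ ⟨t, ht⟩ k0) ?_
        · rw [← h2, h3]
        · intro i hti
          by_cases hit : i = ⟨t, ht⟩
          · subst hit; simp [Function.update_self]
          · rw [Function.update_of_ne hit]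
            refine hγ i ?_
            have : (i : ℕ) ≠ t := fun hh => hit (Fin.ext hh)
            omega
      · exact ih γ fun i hti => absurd hti (by have := i.isLt; omega)
  have hconst : ∀ γ : Fin (M' + 1) → Fin K, c γ = c (fun _ => k0) :=
    fun γ => hP (M' + 1) γ fun i hti => absurd hti (by have := i.isLt; omega)
  -- the scale normalization pins down the constant
  have hc1 : c (fun _ => k0) = 1 := by
    have h := hm' (fun _ => ⟨k0, ⟨0, hd k0⟩⟩)
    have hgood : (fun m : Fin (M' + 1) => ((fun _ : Fin (M' + 1) => (⟨k0, ⟨0, hd k0⟩⟩ : Σ k : Fin K, Fin (d k))) m).1) = fun _ => k0 := rfl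
    rw [hgood, ← hscale] at h
    refine mul_right_cancel₀ hscale0 ?_
    rw [one_mul]
    exact h.symm
  have hcall : ∀ γ, c γ = 1 := fun γ => (hconst γ).trans hc1
  constructor
  · intro τ
    rw [hm' τ, hcall, one_mul]
  · intro δ
    show dV (M' + 2) V δ = dV (M' + 2) V' δ
    have h := hc (Fin.init δ) (δ (Fin.last (M' + 1)))
    rw [Fin.snoc_init_self] at h
    rw [h, hcall, one_mul]
end

section
/- Let K ≥ 2 and fix a natural number M̄ ≥ 1. Let ν and ν' be probability measures on Ω with finite absolute moments of all orders up to M̄, under each of which the coordinate β (good 0) (characteristic 0) is independent of the tuple of all remaining coordinates of β. Let V, V' : (Fin K → ℝ) → ℝ be convex on a neighborhood of the origin and (M̄+1)-times continuously differentiable there. Assume: for every n with 2 ≤ n ≤ M̄+1 and every γ : Fin n → Fin K, ∂_γ V(0) ≠ 0 and ∂_γ V'(0) ≠ 0; for every M with 1 ≤ M ≤ M̄ and every γ : Fin M → Fin K there exists ξ with ξ m : Fin (d (γ m)) such that moment_ν(τ) ≠ 0 for the M-tuple τ m = ⟨γ m, ξ m⟩, and likewise for ν'; |∫ β 0 0 dν(β)|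 = |∫ β 0 0 dν'(β)| ≠ 0; and for every M with 1 ≤ M ≤ M̄, every M-tuple τ and every good k, ∂_{(γ_τ,k)} V(0) · moment_ν(τ) = ∂_{(γ_τ,k)} V'(0) · moment_{ν'}(τ). Then moment_ν(τ) = moment_{ν'}(τ) for every M-tuple τ of every order M ≤ M̄, and ∂_γ V(0) = ∂_γ V'(0) for every γ : Fin n → Fin K with 2 ≤ n ≤ M̄+1. (Proposition: identification of moments under independence of the first random coefficient and a single first-moment scale assumption.) -/
set_option maxHeartbeats 1000000


open MeasureTheory Filter Function Set

section Symm

variable {E : Type} [NormedAddCommGroup E] [NormedSpace ℝ E]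

lemma fderiv_app_perm {F : Type} [NormedAddCommGroup F] [NormedSpace ℝ F]
    {n : ℕ} {g : E → ContinuousMultilinearMap ℝ (fun _ : Fin n => E) F} {x : E}
    (σ' : Equiv.Perm (Fin n))
    (hsym : ∀ᶠ y in nhds x, ∀ w : Fin n → E, g y (w ∘ σ') = g y w)
    (v : E) (w : Fin n → E) :
    fderiv ℝ g x v (w ∘ σ') = fderiv ℝ g x v w := by
  set D := ContinuousMultilinearMap.domDomCongrₗᵢ ℝ E F σ' with hD
  have hEq : (⇑D ∘ g) =ᶠ[nhds x] g := by
    filter_upwards [hsym] with y hy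
    exact ContinuousMultilinearMap.ext fun w => hy w
  have h1 : fderiv ℝ g x = (D : ContinuousMultilinearMap ℝ (fun _ : Fin n => E) F →L[ℝ]
      ContinuousMultilinearMap ℝ (fun _ : Fin n => E) F).comp (fderiv ℝ g x) := by
    conv_lhs => rw [← hEq.fderiv_eq]
    exact D.comp_fderiv
  have h2 : fderiv ℝ g x v = D (fderiv ℝ g x v) := by
    conv_lhs => rw [h1]
    rfl
  conv_rhs => rw [h2]
  rfl

lemma itfd_swap01 : ∀ (k : ℕ) {F : Type} [NormedAddCommGroup F] [NormedSpace ℝ F]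
    {f : E → F} {x : E}, ContDiffAt ℝ (k+2) f x → ∀ m : Fin (k+2) → E,
    iteratedFDeriv ℝ (k+2) f x (m ∘ Equiv.swap 0 1) = iteratedFDeriv ℝ (k+2) f x m := by
  intro k
  induction k with
  | zero =>
    intro F _ _ f x hf m
    have hsymm : IsSymmSndFDerivAt ℝ f x :=
      hf.isSymmSndFDerivAt (by simp)
    have h2 : ∀ m' : Fin (0+2) → E, iteratedFDeriv ℝ (0+2) f x m' =
        fderiv ℝ (fderiv ℝ f) x (m' 0) (m' 1) := fun m' => iteratedFDeriv_two_apply f x m'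
    rw [h2, h2]
    have e0 : (m ∘ Equiv.swap 0 1) 0 = m 1 := by simp
    have e1 : (m ∘ Equiv.swap 0 1) 1 = m 0 := by simp
    rw [e0, e1]
    exact hsymm.eq (m 1) (m 0)
  | succ k IH =>
    intro F _ _ f x hf m
    conv_lhs => rw [iteratedFDeriv_succ_apply_right]
    conv_rhs => rw [iteratedFDeriv_succ_apply_right]
    have h1 : Fin.init (m ∘ Equiv.swap 0 1) = (Fin.init m) ∘ (Equiv.swap 0 1) := by
      funext j
      show m (Equiv.swap 0 1 j.castSucc) = m (Equiv.swap 0 1 j).castSucc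
      congr 1
      rcases eq_or_ne j 0 with rfl | hj0
      · simp [Fin.castSucc_zero]
      rcases eq_or_ne j 1 with rfl | hj1
      · simp [Fin.ext_iff]
      · rw [Equiv.swap_apply_of_ne_of_ne hj0 hj1,
          Equiv.swap_apply_of_ne_of_ne (Fin.castSucc_ne_zero_iff.mpr hj0)
            (fun h => hj1 (Fin.ext (by have := congrArg Fin.val h; rw [Fin.coe_castSucc, Fin.val_one] at this; rw [this, Fin.val_one])))]
    have h2 : (m ∘ Equiv.swap 0 1) (Fin.last (k+2)) = m (Fin.last (k+2)) := by
      have hl : Equiv.swap (0 : Fin (k+1+2)) 1 (Fin.last (k+2)) = Fin.last (k+2) :=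
        Equiv.swap_apply_of_ne_of_ne (by simp [Fin.ext_iff]) (by simp [Fin.ext_iff])
      show m (Equiv.swap 0 1 (Fin.last (k+2))) = m (Fin.last (k+2))
      rw [hl]
    rw [h1, h2]
    have hf' : ContDiffAt ℝ (k+2) (fderiv ℝ f) x :=
      hf.fderiv_right (by exact_mod_cast (by omega : k + 2 + 1 ≤ k + 1 + 2))
    rw [IH hf' (Fin.init m)]

lemma itfd_perm : ∀ {n : ℕ} {F : Type} [NormedAddCommGroup F] [NormedSpace ℝ F]
    {f : E → F} {x : E}, ContDiffAt ℝ n f x →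
    ∀ (σ : Equiv.Perm (Fin n)) (m : Fin n → E),
    iteratedFDeriv ℝ n f x (m ∘ σ) = iteratedFDeriv ℝ n f x m := by
  intro n
  induction n with
  | zero =>
    intro F _ _ f x _ σ m
    have h : m ∘ σ = m := funext fun i => i.elim0
    rw [h]
  | succ n IH =>
    intro F _ _ f x hf σ m
    -- invariance under permutations fixing 0
    have invTail : ∀ (σ : Equiv.Perm (Fin (n+1))), σ 0 = 0 → ∀ m : Fin (n+1) → E,
        iteratedFDeriv ℝ (n+1) f x (m ∘ σ) = iteratedFDeriv ℝ (n+1) f x m := by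
      intro σ hσ0 m
      have hne : ∀ i : Fin n, σ i.succ ≠ 0 := by
        intro i h
        exact (Fin.succ_ne_zero i) (σ.injective (h.trans hσ0.symm))
      have he : Function.Injective (fun i : Fin n => (σ i.succ).pred (hne i)) := by
        intro i j h
        have h2 : σ i.succ = σ j.succ := by
          have := congrArg Fin.succ h
          simpa [Fin.succ_pred] using this
        exact Fin.succ_injective _ (σ.injective h2)
      let σ' : Equiv.Perm (Fin n) :=
        Equiv.ofBijective _ (Finite.injective_iff_bijective.mp he)
      have hσ' : ∀ i : Fin n, σ i.succ = (σ' i).succ := by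
        intro i
        show σ i.succ = ((σ i.succ).pred (hne i)).succ
        rw [Fin.succ_pred]
      have h0 : (m ∘ σ) 0 = m 0 := by simp [hσ0]
      have h1 : Fin.tail (m ∘ σ) = Fin.tail m ∘ σ' := by
        funext i
        simp only [Fin.tail, Function.comp_apply, hσ']
      rw [iteratedFDeriv_succ_apply_left, iteratedFDeriv_succ_apply_left, h0, h1]
      have hev : ∀ᶠ y in nhds x, ContDiffAt ℝ n f y := by
        have h' : ContDiffAt ℝ n f x := hf.of_le (by exact_mod_cast Nat.le_succ n)
        exact h'.eventually (by simp)
      exact fderiv_app_perm σ'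
        (by filter_upwards [hev] with y hy; exact fun w => IH hy σ' w) (m 0) (Fin.tail m)
    by_cases hσ0 : σ 0 = 0
    · exact invTail σ hσ0 m
    · rcases n with _ | k
      · exact absurd (Fin.ext (by have := (σ 0).isLt; omega)) hσ0
      have invSwap : ∀ m : Fin (k+1+1) → E,
          iteratedFDeriv ℝ (k+1+1) f x (m ∘ Equiv.swap 0 1) =
            iteratedFDeriv ℝ (k+1+1) f x m :=
        fun m => itfd_swap01 k (by exact_mod_cast hf) m
      have h1 : σ.symm 0 ≠ 0 := by
        intro h
        apply hσ0
        have := congrArg σ h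
        simpa using this.symm
      set π : Equiv.Perm (Fin (k+1+1)) := Equiv.swap 1 (σ.symm 0) with hπ
      have hπ0 : π 0 = 0 :=
        Equiv.swap_apply_of_ne_of_ne (by simp [Fin.ext_iff]) (Ne.symm h1)
      set ρ : Equiv.Perm (Fin (k+1+1)) := ((Equiv.swap 0 1).trans π).trans σ with hρ
      have hρ0 : ρ 0 = 0 := by
        show σ (π (Equiv.swap 0 1 0)) = 0
        rw [Equiv.swap_apply_left, hπ, Equiv.swap_apply_left]
        simp
      have hdec : m ∘ σ = ((m ∘ ρ) ∘ (Equiv.swap 0 1)) ∘ π.symm := by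
        funext i
        show m (σ i) = m (σ (π (Equiv.swap 0 1 (Equiv.swap 0 1 (π.symm i)))))
        rw [Equiv.swap_apply_self, Equiv.apply_symm_apply]
      have hπinv0 : π.symm 0 = 0 := by
        apply π.injective
        rw [Equiv.apply_symm_apply, hπ0]
      rw [hdec, invTail π.symm hπinv0 ((m ∘ ρ) ∘ (Equiv.swap 0 1)), invSwap (m ∘ ρ),
        invTail ρ hρ0 m]

end Symm


lemma convex_itfd2_nonneg {K : ℕ} {V : (Fin K → ℝ) → ℝ} {U : Set (Fin K → ℝ)}
    (hU : U ∈ nhds (0 : Fin K → ℝ)) (hconv : ConvexOn ℝ U V) (hsm : ContDiffOn ℝ 2 V U)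
    (e : Fin K → ℝ) :
    0 ≤ iteratedFDeriv ℝ 2 V 0 (fun _ => e) := by
  set O := interior U with hO
  have hOopen : IsOpen O := isOpen_interior
  have h0O : (0 : Fin K → ℝ) ∈ O := mem_interior_iff_mem_nhds.2 hU
  have hsmO : ContDiffOn ℝ 2 V O := hsm.mono interior_subset
  have hVdiff : ∀ y ∈ O, DifferentiableAt ℝ V y := fun y hy =>
    ((hsmO y hy).contDiffAt (hOopen.mem_nhds hy)).differentiableAt two_ne_zero
  have hf'diff : DifferentiableAt ℝ (fderiv ℝ V) 0 := by
    have h2 : ContDiffAt ℝ 2 V 0 := (hsmO 0 h0O).contDiffAt (hOopen.mem_nhds h0O)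
    exact (h2.fderiv_right (by norm_num : (1:WithTop ℕ∞) + 1 ≤ 2)).differentiableAt one_ne_zero
  set L : ℝ → (Fin K → ℝ) := fun t => t • e with hL
  have hLcont : Continuous L := (continuous_id.smul continuous_const)
  have hL0 : L 0 = 0 := by simp [hL]
  set T : Set ℝ := L ⁻¹' O with hT
  have hTopen : IsOpen T := hOopen.preimage hLcont
  have h0T : (0:ℝ) ∈ T := by simp [hT, hL0, h0O]
  obtain ⟨ε, hε, hball⟩ := Metric.isOpen_iff.mp hTopen 0 h0T
  rw [Real.ball_eq_Ioo, zero_sub, zero_add] at hball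
  set g : ℝ → ℝ := V ∘ L with hg
  -- convexity of g on Ioo (-ε) ε
  have hgconv : ConvexOn ℝ (Ioo (-ε) ε) g := by
    have hcomp : ConvexOn ℝ ((LinearMap.toSpanSingleton ℝ (Fin K → ℝ) e) ⁻¹' U)
        (V ∘ (LinearMap.toSpanSingleton ℝ (Fin K → ℝ) e)) :=
      hconv.comp_linearMap _
    have hss : Ioo (-ε) ε ⊆ (LinearMap.toSpanSingleton ℝ (Fin K → ℝ) e) ⁻¹' U := by
      intro t ht
      have h7 : L t ∈ O := hball ht
      show L t ∈ U
      exact interior_subset h7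
    exact hcomp.subset hss (convex_Ioo _ _)
  -- derivative of g
  set G : ℝ → ℝ := fun t => fderiv ℝ V (L t) e with hG
  have hLder : ∀ t : ℝ, HasDerivAt L e t := by
    intro t
    simpa using (hasDerivAt_id t).smul_const e
  have hgder : ∀ t ∈ T, HasDerivAt g (G t) t := by
    intro t ht
    exact ((hVdiff _ ht).hasFDerivAt).comp_hasDerivAt t (hLder t)
  -- second derivative of g at 0
  set Q : ℝ := fderiv ℝ (fderiv ℝ V) 0 e e with hQ
  have hGder : HasDerivAt G Q 0 := by
    have h4 : HasDerivAt (fun t => fderiv ℝ V (L t)) (fderiv ℝ (fderiv ℝ V) 0 e) 0 := by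
      have h4' : HasFDerivAt (fderiv ℝ V) (fderiv ℝ (fderiv ℝ V) 0) (L 0) := by
        rw [hL0]; exact hf'diff.hasFDerivAt
      exact h4'.comp_hasDerivAt 0 (hLder 0)
    have h5 := (ContinuousLinearMap.apply ℝ ℝ e).hasFDerivAt.comp_hasDerivAt 0 h4
    exact h5
  -- monotonicity of deriv g
  have hmono : MonotoneOn (deriv g) (Ioo (-ε) ε) := by
    apply hgconv.monotoneOn_deriv
    intro t ht
    exact (hgder t (hball ht)).differentiableAt
  have hGd : ∀ t ∈ Ioo (-ε) ε, deriv g t = G t := fun t ht => (hgder t (hball ht)).deriv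
  -- conclude
  have hQnonneg : 0 ≤ Q := by
    have htend : Tendsto (fun t => (G t - G 0) / t) (nhdsWithin 0 (Ioi 0)) (nhds Q) := by
      have := hasDerivAt_iff_tendsto_slope.mp hGder
      have h6 : Tendsto (slope G 0) (nhdsWithin 0 (Ioi 0)) (nhds Q) :=
        this.mono_left (nhdsWithin_mono 0 (fun t ht => by simpa using ne_of_gt ht))
      refine h6.congr' ?_
      filter_upwards with t
      rw [slope_def_field]
      ring_nf
    apply ge_of_tendsto htend
    filter_upwards [Ioo_mem_nhdsGT_of_mem (by constructor <;> [exact le_refl 0; exact hε] :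
      (0:ℝ) ∈ Ico 0 ε)] with t ht
    have h0mem : (0:ℝ) ∈ Ioo (-ε) ε := ⟨by linarith, hε⟩
    have htmem : t ∈ Ioo (-ε) ε := ⟨by linarith [ht.1], ht.2⟩
    have hle : G 0 ≤ G t := by
      rw [← hGd 0 h0mem, ← hGd t htmem]
      exact hmono h0mem htmem (le_of_lt ht.1)
    exact div_nonneg (by linarith) (le_of_lt ht.1)
  have hfinal : iteratedFDeriv ℝ 2 V 0 (fun _ => e) = Q := by
    rw [iteratedFDeriv_two_apply]
  rwa [hfinal]

lemma coord_meas {K : ℕ} {d : Fin K → ℕ} (q : Σ k : Fin K, Fin (d k)) :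
    Measurable (fun β : Coeff K d => β q.1 q.2) :=
  (measurable_pi_apply q.2).comp (measurable_pi_apply q.1)

lemma moment_snoc_indep {K : ℕ} {d : Fin K → ℕ} {M : ℕ}
    (ν : Measure (Coeff K d)) [IsProbabilityMeasure ν]
    (p : Σ k : Fin K, Fin (d k))
    (hind : ProbabilityTheory.IndepFun (fun β : Coeff K d => β p.1 p.2)
      (fun (β : Coeff K d) (i : {i : Σ k : Fin K, Fin (d k) // i ≠ p}) => β i.1.1 i.1.2) ν)
    (τ : Fin M → Σ k : Fin K, Fin (d k)) (hτ : ∀ m, τ m ≠ p) :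
    moment ν (Fin.snoc τ p) = (∫ β, β p.1 p.2 ∂ν) * moment ν τ := by
  set X : Coeff K d → ℝ := fun β => β p.1 p.2 with hX
  set Y : Coeff K d → ℝ := fun β => ∏ m : Fin M, β (τ m).1 (τ m).2 with hY
  have hYmeas : Measurable Y := by
    apply Finset.measurable_prod
    intro m _
    exact coord_meas (τ m)
  have hXY : ProbabilityTheory.IndepFun X Y ν := by
    have hg : Measurable (fun (f : {i : Σ k : Fin K, Fin (d k) // i ≠ p} → ℝ) =>
        ∏ m : Fin M, f ⟨τ m, hτ m⟩) := by
      apply Finset.measurable_prod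
      intro m _
      exact measurable_pi_apply _
    have := hind.comp measurable_id hg
    exact this
  have hint : ∫ β, (X * Y) β ∂ν = (∫ β, X β ∂ν) * ∫ β, Y β ∂ν :=
    hXY.integral_mul_eq_mul_integral (coord_meas p).aestronglyMeasurable hYmeas.aestronglyMeasurable
  set τ' : Fin (M+1) → Σ k : Fin K, Fin (d k) := Fin.snoc τ p with hτ'
  have hprod : ∀ β : Coeff K d,
      (∏ m : Fin (M+1), β (τ' m).1 (τ' m).2) = (X * Y) β := by
    intro β
    rw [Fin.prod_univ_castSucc]
    have h1 : ∀ i : Fin M, τ' (Fin.castSucc i) = τ i := fun i => Fin.snoc_castSucc _ _ _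
    have h2 : τ' (Fin.last M) = p := Fin.snoc_last _ _
    rw [h2]
    rw [Finset.prod_congr rfl (fun i _ => by rw [h1 i])]
    rw [Pi.mul_apply, hX, hY, mul_comm]
  calc moment ν τ' = ∫ β, (X * Y) β ∂ν := by
        unfold moment
        exact integral_congr_ae (Filter.Eventually.of_forall hprod)
    _ = (∫ β, X β ∂ν) * ∫ β, Y β ∂ν := hint
    _ = (∫ β, β p.1 p.2 ∂ν) * moment ν τ := rfl

/-- Proposition: identification of moments under independence of the first random coefficient
and a single first-moment scale assumption. -/
theorem stmt2 {K : ℕ} (hK : 2 ≤ K) {d : Fin K → ℕ} (hd : ∀ k, 0 < d k)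
    (M' : ℕ) (hM' : 1 ≤ M')
    (ν ν' : Measure (Coeff K d)) [IsProbabilityMeasure ν] [IsProbabilityMeasure ν']
    (hνmom : ∀ M : ℕ, M ≤ M' → ∀ τ : Fin M → Σ k : Fin K, Fin (d k),
      Integrable (fun β => ∏ m : Fin M, |β (τ m).1 (τ m).2|) ν)
    (hν'mom : ∀ M : ℕ, M ≤ M' → ∀ τ : Fin M → Σ k : Fin K, Fin (d k),
      Integrable (fun β => ∏ m : Fin M, |β (τ m).1 (τ m).2|) ν')
    -- independence of `β 0 0` from all remaining coordinates of `β`, under `ν` and under `ν'`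
    (hind : ProbabilityTheory.IndepFun
      (fun β : Coeff K d => β ⟨0, by omega⟩ ⟨0, hd _⟩)
      (fun (β : Coeff K d)
          (i : {i : Σ k : Fin K, Fin (d k) //
            i ≠ ⟨⟨0, by omega⟩, ⟨0, hd _⟩⟩}) => β i.1.1 i.1.2) ν)
    (hind' : ProbabilityTheory.IndepFun
      (fun β : Coeff K d => β ⟨0, by omega⟩ ⟨0, hd _⟩)
      (fun (β : Coeff K d)
          (i : {i : Σ k : Fin K, Fin (d k) //
            i ≠ ⟨⟨0, by omega⟩, ⟨0, hd _⟩⟩}) => β i.1.1 i.1.2) ν')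
    (V V' : (Fin K → ℝ) → ℝ)
    (hV : ∃ U ∈ nhds (0 : Fin K → ℝ), ConvexOn ℝ U V ∧ ContDiffOn ℝ (M' + 1) V U)
    (hV' : ∃ U ∈ nhds (0 : Fin K → ℝ), ConvexOn ℝ U V' ∧ ContDiffOn ℝ (M' + 1) V' U)
    (hVne : ∀ n : ℕ, 2 ≤ n → n ≤ M' + 1 → ∀ γ : Fin n → Fin K, dV n V γ ≠ 0)
    (hV'ne : ∀ n : ℕ, 2 ≤ n → n ≤ M' + 1 → ∀ γ : Fin n → Fin K, dV n V' γ ≠ 0)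
    (hrel : ∀ M : ℕ, 1 ≤ M → M ≤ M' → ∀ γ : Fin M → Fin K, ∃ ξ : ∀ m, Fin (d (γ m)),
      moment ν (fun m => ⟨γ m, ξ m⟩) ≠ 0)
    (hrel' : ∀ M : ℕ, 1 ≤ M → M ≤ M' → ∀ γ : Fin M → Fin K, ∃ ξ : ∀ m, Fin (d (γ m)),
      moment ν' (fun m => ⟨γ m, ξ m⟩) ≠ 0)
    (hscale : |∫ β, β ⟨0, by omega⟩ ⟨0, hd _⟩ ∂ν| = |∫ β, β ⟨0, by omega⟩ ⟨0, hd _⟩ ∂ν'|)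
    (hscale0 : |∫ β, β ⟨0, by omega⟩ ⟨0, hd _⟩ ∂ν| ≠ 0)
    (hobs : ∀ M : ℕ, 1 ≤ M → M ≤ M' → ∀ (τ : Fin M → Σ k : Fin K, Fin (d k)) (k : Fin K),
      dV (M + 1) V (Fin.snoc (fun m => (τ m).1) k) * moment ν τ
        = dV (M + 1) V' (Fin.snoc (fun m => (τ m).1) k) * moment ν' τ) :
    (∀ M : ℕ, M ≤ M' → ∀ τ : Fin M → Σ k : Fin K, Fin (d k),
      moment ν τ = moment ν' τ) ∧
    (∀ n : ℕ, 2 ≤ n → n ≤ M' + 1 → ∀ γ : Fin n → Fin K, dV n V γ = dV n V' γ) := by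
  classical
  obtain ⟨U, hUmem, hUconv, hUsm⟩ := hV
  obtain ⟨U', hU'mem, hU'conv, hU'sm⟩ := hV'
  have hVat : ContDiffAt ℝ (M' + 1 : ℕ) V 0 := by
    have := hUsm.contDiffAt hUmem
    exact_mod_cast this
  have hV'at : ContDiffAt ℝ (M' + 1 : ℕ) V' 0 := by
    have := hU'sm.contDiffAt hU'mem
    exact_mod_cast this
  -- symmetry of iterated partial derivatives
  have hsymV : ∀ (n : ℕ), n ≤ M' + 1 → ∀ (γ : Fin n → Fin K) (σ : Equiv.Perm (Fin n)),
      dV n V (γ ∘ σ) = dV n V γ := by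
    intro n hn γ σ
    have hc : ContDiffAt ℝ n V 0 := hVat.of_le (by exact_mod_cast hn)
    have h := itfd_perm hc σ (fun i => Pi.single (γ i) 1)
    unfold dV
    exact h
  have hsymV' : ∀ (n : ℕ), n ≤ M' + 1 → ∀ (γ : Fin n → Fin K) (σ : Equiv.Perm (Fin n)),
      dV n V' (γ ∘ σ) = dV n V' γ := by
    intro n hn γ σ
    have hc : ContDiffAt ℝ n V' 0 := hV'at.of_le (by exact_mod_cast hn)
    have h := itfd_perm hc σ (fun i => Pi.single (γ i) 1)
    unfold dV
    exact h
  set p0 : Σ k : Fin K, Fin (d k) := ⟨⟨0, by omega⟩, ⟨0, hd _⟩⟩ with hp0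
  set E : ℝ := ∫ β, β p0.1 p0.2 ∂ν with hE
  set E' : ℝ := ∫ β, β p0.1 p0.2 ∂ν' with hE'
  have hEabs : |E| = |E'| := hscale
  have hE0 : E ≠ 0 := by
    intro h
    apply hscale0
    show |E| = 0
    rw [h, abs_zero]
  -- key equation, division form
  set R : ∀ M : ℕ, (Fin (M+1) → Fin K) → ℝ :=
    fun M δ => dV (M+1) V' δ / dV (M+1) V δ with hRdef
  have hC0' : ∀ M : ℕ, 1 ≤ M → M ≤ M' → ∀ (τ : Fin M → Σ k : Fin K, Fin (d k)) (k : Fin K),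
      moment ν τ = R M (Fin.snoc (fun m => (τ m).1) k) * moment ν' τ := by
    intro M h1 h2 τ k
    have h := hobs M h1 h2 τ k
    have hA : dV (M+1) V (Fin.snoc (fun m => (τ m).1) k) ≠ 0 :=
      hVne (M+1) (by omega) (by omega) _
    simp only [hRdef]
    rw [div_mul_eq_mul_div, ← h, mul_comm (dV (M+1) V _) (moment ν τ), mul_div_assoc,
      div_self hA, mul_one]
  -- witnesses with nonvanishing moments
  have hwit : ∀ M : ℕ, 1 ≤ M → M ≤ M' → ∀ γ : Fin M → Fin K,
      ∃ τ : Fin M → Σ k : Fin K, Fin (d k), (fun m => (τ m).1) = γ ∧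
        moment ν τ ≠ 0 ∧ moment ν' τ ≠ 0 := by
    intro M h1 h2 γ
    obtain ⟨ξ, hξ⟩ := hrel M h1 h2 γ
    refine ⟨fun m => ⟨γ m, ξ m⟩, rfl, hξ, ?_⟩
    intro h0
    have h := hobs M h1 h2 (fun m => ⟨γ m, ξ m⟩) p0.1
    rw [h0, mul_zero] at h
    exact hξ ((mul_eq_zero.mp h).resolve_left (hVne (M+1) (by omega) (by omega) _))
  -- R does not depend on the appended coordinate
  have hRk : ∀ M : ℕ, 1 ≤ M → M ≤ M' → ∀ (γ : Fin M → Fin K) (k k' : Fin K),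
      R M (Fin.snoc γ k) = R M (Fin.snoc γ k') := by
    intro M h1 h2 γ k k'
    obtain ⟨τ, hτγ, hτν, hτν'⟩ := hwit M h1 h2 γ
    have e1 := hC0' M h1 h2 τ k
    have e2 := hC0' M h1 h2 τ k'
    rw [hτγ] at e1 e2
    exact mul_right_cancel₀ hτν' (e1.symm.trans e2)
  -- R is invariant under permutations
  have hRperm : ∀ M : ℕ, 1 ≤ M → M ≤ M' → ∀ (δ : Fin (M+1) → Fin K)
      (σ : Equiv.Perm (Fin (M+1))), R M (δ ∘ σ) = R M δ := by
    intro M h1 h2 δ σ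
    simp only [hRdef]
    rw [hsymV (M+1) (by omega) δ σ, hsymV' (M+1) (by omega) δ σ]
  -- R is invariant under updating one coordinate
  have hRupdate : ∀ M : ℕ, 1 ≤ M → M ≤ M' → ∀ (δ : Fin (M+1) → Fin K) (i : Fin (M+1))
      (k : Fin K), R M δ = R M (Function.update δ i k) := by
    intro M h1 h2 δ i k
    set σ : Equiv.Perm (Fin (M+1)) := Equiv.swap i (Fin.last M) with hσ
    have hmove : ∀ j : Fin M, σ (Fin.castSucc j) ≠ i := by
      intro j h
      have h2 : Fin.castSucc j = Fin.last M := by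
        have := congrArg σ h
        rw [hσ, Equiv.swap_apply_self, Equiv.swap_apply_left] at this
        exact this
      exact absurd h2 (Fin.castSucc_lt_last j).ne
    have hcomp : ∀ (k' : Fin K), (Function.update δ i k') ∘ σ
        = Fin.snoc (Fin.init (δ ∘ σ)) k' := by
      intro k'
      funext j
      refine Fin.lastCases ?_ ?_ j
      · show Function.update δ i k' (σ (Fin.last M)) = _
        rw [hσ, Equiv.swap_apply_right, Function.update_self, Fin.snoc_last]
      · intro j'
        show Function.update δ i k' (σ (Fin.castSucc j')) = _
        rw [Function.update_of_ne (hmove j'), Fin.snoc_castSucc]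
        rfl
    calc R M δ = R M (δ ∘ σ) := (hRperm M h1 h2 δ σ).symm
      _ = R M (Fin.snoc (Fin.init (δ ∘ σ)) ((δ ∘ σ) (Fin.last M))) := by
          rw [Fin.snoc_init_self]
      _ = R M (Fin.snoc (Fin.init (δ ∘ σ)) k) := hRk M h1 h2 _ _ _
      _ = R M ((Function.update δ i k) ∘ σ) := by rw [hcomp k]
      _ = R M (Function.update δ i k) := hRperm M h1 h2 _ σ
  -- R is constant
  have hRconst : ∀ M : ℕ, 1 ≤ M → M ≤ M' → ∀ (δ δ' : Fin (M+1) → Fin K),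
      R M δ = R M δ' := by
    intro M h1 h2
    suffices h : ∀ (s : Finset (Fin (M+1))) (δ δ' : Fin (M+1) → Fin K),
        (∀ i, i ∉ s → δ i = δ' i) → R M δ = R M δ' by
      intro δ δ'
      exact h Finset.univ δ δ' (fun i hi => absurd (Finset.mem_univ i) hi)
    intro s
    induction s using Finset.induction_on with
    | empty =>
      intro δ δ' hagree
      have : δ = δ' := funext fun i => hagree i (Finset.notMem_empty i)
      rw [this]
    | @insert i s his IH =>
      intro δ δ' hagree
      rw [hRupdate M h1 h2 δ i (δ' i)]
      apply IH
      intro j hj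
      rcases eq_or_ne j i with rfl | hji
      · rw [Function.update_self]
      · rw [Function.update_of_ne hji]
        exact hagree j (by simp [hji, hj])
  -- positivity of pure second derivatives in direction 0
  have hsnocconst : ∀ k : Fin K, Fin.snoc (fun _ : Fin 1 => k) k = (fun _ : Fin 2 => k) := by
    intro k
    funext j
    refine Fin.lastCases ?_ ?_ j
    · rw [Fin.snoc_last]
    · intro j'
      rw [Fin.snoc_castSucc]
  have ha : 0 < dV 2 V (fun _ : Fin 2 => p0.1) := by
    have hnn : 0 ≤ dV 2 V (fun _ : Fin 2 => p0.1) := by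
      have h := convex_itfd2_nonneg hUmem hUconv
        (hUsm.of_le (by exact_mod_cast (by omega : (2:ℕ) ≤ M' + 1))) (Pi.single p0.1 1)
      exact h
    exact lt_of_le_of_ne hnn (Ne.symm (hVne 2 le_rfl (by omega) _))
  have ha' : 0 < dV 2 V' (fun _ : Fin 2 => p0.1) := by
    have hnn : 0 ≤ dV 2 V' (fun _ : Fin 2 => p0.1) := by
      have h := convex_itfd2_nonneg hU'mem hU'conv
        (hU'sm.of_le (by exact_mod_cast (by omega : (2:ℕ) ≤ M' + 1))) (Pi.single p0.1 1)
      exact h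
    exact lt_of_le_of_ne hnn (Ne.symm (hV'ne 2 le_rfl (by omega) _))
  -- first moments
  have hmom1ν : moment ν (fun _ : Fin 1 => p0) = E := by
    unfold moment
    simp only [Fin.prod_univ_one]
    rfl
  have hmom1ν' : moment ν' (fun _ : Fin 1 => p0) = E' := by
    unfold moment
    simp only [Fin.prod_univ_one]
    rfl
  -- E = E'
  have hEE' : E = E' := by
    have h := hobs 1 le_rfl hM' (fun _ => p0) p0.1
    rw [hmom1ν, hmom1ν'] at h
    have h2 : dV 2 V (fun _ : Fin 2 => p0.1) * E = dV 2 V' (fun _ : Fin 2 => p0.1) * E' := by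
      rw [← hsnocconst p0.1]
      exact h
    rcases abs_eq_abs.mp hEabs with heq | hneg
    · exact heq
    · exfalso
      have h3 : (dV 2 V (fun _ : Fin 2 => p0.1) + dV 2 V' (fun _ : Fin 2 => p0.1)) * E = 0 := by
        rw [add_mul]
        have : E' = -E := by rw [hneg]; ring
        rw [this] at h2
        linarith
      rcases mul_eq_zero.mp h3 with h4 | h4
      · linarith
      · exact hE0 h4
  have hE'0 : E' ≠ 0 := by rw [← hEE']; exact hE0
  -- the common ratio
  set Rbar : ℕ → ℝ := fun M => R M (fun _ : Fin (M+1) => p0.1) with hRbar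
  have hMom : ∀ M : ℕ, 1 ≤ M → M ≤ M' → ∀ τ : Fin M → Σ k : Fin K, Fin (d k),
      moment ν τ = Rbar M * moment ν' τ := by
    intro M h1 h2 τ
    rw [hC0' M h1 h2 τ p0.1]
    congr 1
    exact hRconst M h1 h2 _ _
  have hRbar1 : Rbar 1 = 1 := by
    have h := hMom 1 le_rfl hM' (fun _ => p0)
    rw [hmom1ν, hmom1ν', hEE'] at h
    have h2 : Rbar 1 * E' = 1 * E' := by rw [one_mul]; exact h.symm
    exact mul_right_cancel₀ hE'0 h2
  have hstep : ∀ M : ℕ, 1 ≤ M → M + 1 ≤ M' → Rbar (M+1) = Rbar M := by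
    intro M h1 h2
    obtain ⟨ξ, hξ⟩ := hrel M h1 (by omega) (fun _ => (⟨1, by omega⟩ : Fin K))
    set τ : Fin M → Σ k : Fin K, Fin (d k) :=
      fun m => ⟨(⟨1, by omega⟩ : Fin K), ξ m⟩ with hτ
    have hτν : moment ν τ ≠ 0 := hξ
    have hτν' : moment ν' τ ≠ 0 := by
      intro h0
      have h := hMom M h1 (by omega) τ
      rw [h0, mul_zero] at h
      exact hτν h
    have hne : ∀ m, τ m ≠ p0 := by
      intro m h
      have h5 : (τ m).1 = p0.1 := congrArg Sigma.fst h
      rw [hτ, hp0] at h5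
      simp [Fin.ext_iff] at h5
    have hsplit : moment ν (Fin.snoc τ p0) = E * moment ν τ :=
      moment_snoc_indep ν p0 hind τ hne
    have hsplit' : moment ν' (Fin.snoc τ p0) = E' * moment ν' τ :=
      moment_snoc_indep ν' p0 hind' τ hne
    have hMsnoc := hMom (M+1) (by omega) h2 (Fin.snoc τ p0)
    rw [hsplit, hsplit', hMom M h1 (by omega) τ, hEE'] at hMsnoc
    have hcan : Rbar (M+1) * (E' * moment ν' τ) = Rbar M * (E' * moment ν' τ) := by
      ring_nf
      ring_nf at hMsnoc
      linarith
    exact mul_right_cancel₀ (mul_ne_zero hE'0 hτν') hcan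
  have hRbarone : ∀ M : ℕ, 1 ≤ M → M ≤ M' → Rbar M = 1 := by
    intro M
    induction M with
    | zero => intro h; exact absurd h (by norm_num)
    | succ M IH =>
      intro _ h2
      rcases Nat.eq_zero_or_pos M with rfl | hM
      · exact hRbar1
      · rw [hstep M hM h2]
        exact IH hM (by omega)
  constructor
  · intro M hM τ
    rcases Nat.eq_zero_or_pos M with rfl | h1
    · unfold moment
      have hz : ∀ β : Coeff K d, (∏ m : Fin 0, β (τ m).1 (τ m).2) = 1 := by
        intro β
        simp
      simp only [hz]
      simp
    · rw [hMom M h1 hM τ, hRbarone M h1 hM, one_mul]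
  · intro n h2 hn γ
    obtain ⟨M, rfl⟩ : ∃ M, n = M + 1 := ⟨n - 1, by omega⟩
    have h1 : 1 ≤ M := by omega
    have hMM' : M ≤ M' := by omega
    obtain ⟨τ, hτγ, hτν, hτν'⟩ := hwit M h1 hMM' (Fin.init γ)
    have h := hobs M h1 hMM' τ (γ (Fin.last M))
    have hmm : moment ν τ = moment ν' τ := by
      rw [hMom M h1 hMM' τ, hRbarone M h1 hMM', one_mul]
    rw [hτγ, Fin.snoc_init_self, ← hmm] at h
    exact mul_right_cancel₀ hτν h
end

section
/- Let B̄ ⊆ EuclideanSpace ℝ (Fin K) be nonempty, closed, and convex, and let D̄ : EuclideanSpace ℝ (Fin K) → EReal satisfy D̄ y < ⊤ for every y, have closed convex hypograph {(y, t) : EuclideanSpace ℝ (Fin K) × ℝ | (t : EReal) ≤ D̄ y}, and satisfy D̄ y₀ > ⊥ for some y₀ ∈ B̄. Let u ∈ EuclideanSpace ℝ (Fin K), let U be an open neighborhood of u, and let v : EuclideanSpace ℝ (Fin K) → ℝ satisfy (v w : EReal) = ⨆_{y ∈ B̄} ((⟨w, y⟩ : EReal) + D̄ y) for every w ∈ U.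 Suppose there exists ȳ ∈ B̄ with D̄ ȳ ∈ ℝ such that (⟨u, ȳ⟩ : EReal) + D̄ ȳ = (v u : EReal), and that ȳ is the unique maximizer: every y ∈ B̄ with (⟨u, y⟩ : EReal) + D̄ y = (v u : EReal) equals ȳ. Then v is differentiable at u with gradient ȳ, i.e. HasGradientAt v ȳ u. (Envelope theorem: the integrated mean choice equals the gradient of the integrated indirect utility.) -/
open scoped RealInnerProductSpace
open Metric Filter

set_option maxHeartbeats 2000000

/-- Envelope theorem: the unique maximizer of the aggregated perturbed utility is the gradient
of the integrated indirect utility. -/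
theorem stmt5 {K : ℕ} (hK : 0 < K)
    (B : Set (EuclideanSpace ℝ (Fin K)))
    (hBne : B.Nonempty) (hBclosed : IsClosed B) (hBconv : Convex ℝ B)
    (D : EuclideanSpace ℝ (Fin K) → EReal)
    (hDtop : ∀ y, D y < ⊤)
    (hhypoClosed : IsClosed {p : EuclideanSpace ℝ (Fin K) × ℝ | (p.2 : EReal) ≤ D p.1})
    (hhypoConvex : Convex ℝ {p : EuclideanSpace ℝ (Fin K) × ℝ | (p.2 : EReal) ≤ D p.1})
    (hDbot : ∃ y₀ ∈ B, ⊥ < D y₀)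
    (u : EuclideanSpace ℝ (Fin K)) (U : Set (EuclideanSpace ℝ (Fin K)))
    (hUopen : IsOpen U) (hu : u ∈ U)
    (v : EuclideanSpace ℝ (Fin K) → ℝ)
    (hv : ∀ w ∈ U, (v w : EReal) = ⨆ y ∈ B, ((⟪w, y⟫ : ℝ) : EReal) + D y)
    (ybar : EuclideanSpace ℝ (Fin K)) (hybarB : ybar ∈ B)
    (hybarReal : ∃ r : ℝ, D ybar = (r : EReal))
    (hmax : ((⟪u, ybar⟫ : ℝ) : EReal) + D ybar = (v u : EReal))
    (huniq : ∀ y ∈ B, ((⟪u, y⟫ : ℝ) : EReal) + D y = (v u : EReal) → y = ybar) :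
    HasGradientAt v ybar u := by
  classical
  obtain ⟨r0, hr0⟩ := hybarReal
  -- basic facts about the sup
  have key1 : ∀ w ∈ U, ∀ y ∈ B, ((⟪w, y⟫ : ℝ) : EReal) + D y ≤ ((v w : ℝ) : EReal) := by
    intro w hw y hy
    rw [hv w hw]
    exact le_biSup (fun y => ((⟪w, y⟫ : ℝ) : EReal) + D y) hy
  have key2 : ∀ w ∈ U, ∀ y ∈ B, ∀ d : ℝ, D y = (d : EReal) → ⟪w, y⟫ + d ≤ v w := by
    intro w hw y hy d hd
    have h := key1 w hw y hy
    rw [hd, ← EReal.coe_add] at h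
    exact_mod_cast h
  have key3 : ∀ w ∈ U, ∀ δ : ℝ, 0 < δ →
      ∃ y ∈ B, ∃ d : ℝ, D y = (d : EReal) ∧ v w - δ < ⟪w, y⟫ + d := by
    intro w hw δ hδ
    have hlt : ((v w - δ : ℝ) : EReal) < ⨆ y ∈ B, ((⟪w, y⟫ : ℝ) : EReal) + D y := by
      rw [← hv w hw]
      exact_mod_cast sub_lt_self (v w) hδ
    rw [lt_iSup_iff] at hlt
    obtain ⟨y, hy⟩ := hlt
    rw [lt_iSup_iff] at hy
    obtain ⟨hyB, hy⟩ := hy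
    have hbot : D y ≠ ⊥ := by
      intro hb
      rw [hb, EReal.add_bot] at hy
      exact (not_lt_bot hy)
    have htop : D y ≠ ⊤ := (hDtop y).ne
    refine ⟨y, hyB, (D y).toReal, (EReal.coe_toReal htop hbot).symm, ?_⟩
    rw [← EReal.coe_toReal htop hbot, ← EReal.coe_add] at hy
    exact_mod_cast hy
  have hvu : v u = ⟪u, ybar⟫ + r0 := by
    rw [hr0, ← EReal.coe_add] at hmax
    exact_mod_cast hmax.symm
  -- a ball inside U
  obtain ⟨r, hrpos, hballU⟩ := Metric.isOpen_iff.mp hUopen u hu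
  -- convexity of v on the ball
  have hconv : ConvexOn ℝ (ball u r) v := by
    refine ⟨convex_ball u r, ?_⟩
    intro x hx y hy a b ha hb hab
    have hw : a • x + b • y ∈ ball u r := (convex_ball u r) hx hy ha hb hab
    have hwU : a • x + b • y ∈ U := hballU hw
    simp only [smul_eq_mul]
    refine le_of_forall_pos_le_add ?_
    intro δ hδ
    obtain ⟨z, hzB, d, hd, hlt⟩ := key3 _ hwU δ hδ
    have h1 := mul_le_mul_of_nonneg_left (key2 x (hballU hx) z hzB d hd) ha
    have h2 := mul_le_mul_of_nonneg_left (key2 y (hballU hy) z hzB d hd) hb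
    have hinner : ⟪a • x + b • y, z⟫ = a * ⟪x, z⟫ + b * ⟪y, z⟫ := by
      rw [inner_add_left, real_inner_smul_left, real_inner_smul_left]
    have hdsum : a * d + b * d = d := by rw [← add_mul, hab, one_mul]
    rw [hinner] at hlt
    nlinarith [h1, h2, hlt, hdsum]
  have hcont : ContinuousOn v (ball u r) := hconv.continuousOn isOpen_ball
  have hcontu : ContinuousAt v u :=
    hcont.continuousAt (isOpen_ball.mem_nhds (mem_ball_self hrpos))
  -- upper bound on the closed ball of radius r/2
  have hsub : closedBall u (r / 2) ⊆ ball u r := closedBall_subset_ball (by linarith)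
  obtain ⟨wM, hwM, hM⟩ := (isCompact_closedBall u (r / 2)).exists_isMaxOn
    ⟨u, mem_closedBall_self (by linarith)⟩ (hcont.mono hsub)
  set M : ℝ := v wM with hMdef
  -- lower (subgradient) bound
  have hlow : ∀ w ∈ U, v u + ⟪w - u, ybar⟫ ≤ v w := by
    intro w hw
    have h := key2 w hw ybar hybarB r0 hr0
    have e : ⟪w - u, ybar⟫ = ⟪w, ybar⟫ - ⟪u, ybar⟫ := inner_sub_left _ _ _
    rw [hvu]; linarith
  rw [hasGradientAt_iff_isLittleO, Asymptotics.isLittleO_iff]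
  intro ε hε
  suffices hupper : ∀ᶠ w in nhds u, v w - v u - ⟪ybar, w - u⟫ ≤ ε * ‖w - u‖ by
    filter_upwards [hupper, hUopen.mem_nhds hu] with w h1 hwU
    have h0 : 0 ≤ v w - v u - ⟪ybar, w - u⟫ := by
      have := hlow w hwU
      rw [real_inner_comm] at this
      linarith
    rw [Real.norm_eq_abs, abs_of_nonneg h0]
    exact h1
  by_contra hcon
  rw [Filter.not_eventually] at hcon
  -- extract a sequence witnessing the failure of differentiability
  have hseq : ∀ n : ℕ, ∃ w, dist w u < min (r / 4) (1 / (n + 1)) ∧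
      ε * ‖w - u‖ < v w - v u - ⟪ybar, w - u⟫ := by
    intro n
    have hb : ball u (min (r / 4) (1 / (n + 1))) ∈ nhds u :=
      ball_mem_nhds _ (lt_min (by linarith) (by positivity))
    obtain ⟨w, hw1, hw2⟩ := (hcon.and_eventually hb).exists
    push_neg at hw1
    exact ⟨w, hw2, hw1⟩
  choose w hwdist hwgap using hseq
  have hwball : ∀ n, w n ∈ ball u (r / 4) := fun n =>
    mem_ball.mpr ((hwdist n).trans_le (min_le_left _ _))
  have hwU : ∀ n, w n ∈ U := fun n =>
    hballU (mem_ball.mpr (lt_of_lt_of_le (mem_ball.mp (hwball n)) (by linarith)))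
  have hwne : ∀ n, 0 < ‖w n - u‖ := by
    intro n
    rcases (norm_nonneg (w n - u)).eq_or_lt with h | h
    · exfalso
      have hwu : w n = u := sub_eq_zero.mp (norm_eq_zero.mp h.symm)
      have hg := hwgap n
      rw [hwu] at hg
      simp only [sub_self, norm_zero, mul_zero, inner_zero_right] at hg
      linarith
    · exact h
  have hwtend : Tendsto w atTop (nhds u) := by
    rw [tendsto_iff_dist_tendsto_zero]
    refine squeeze_zero (fun n => dist_nonneg)
      (fun n => ((hwdist n).trans_le (min_le_right _ _)).le) ?_
    exact tendsto_one_div_add_atTop_nhds_zero_nat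
  set δ : ℕ → ℝ := fun n => ε * ‖w n - u‖ / 2 with hδdef
  have hδpos : ∀ n, 0 < δ n := fun n => by
    have := hwne n; positivity
  choose y hyB d hd hlt using fun n => key3 (w n) (hwU n) (δ n) (hδpos n)
  have hyub : ∀ n, ⟪u, y n⟫ + d n ≤ v u := fun n => key2 u hu (y n) (hyB n) (d n) (hd n)
  -- the near maximizers stay far from ybar
  have hfar : ∀ n, ε / 2 ≤ ‖y n - ybar‖ := by
    intro n
    have h1 := hlt n
    have h2 := hyub n
    have h3 := hwgap n
    have i1 : ⟪w n - u, y n - ybar⟫ =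
        (⟪w n, y n⟫ - ⟪u, y n⟫) - ⟪ybar, w n - u⟫ := by
      rw [inner_sub_right, inner_sub_left, real_inner_comm (w n - u) ybar]
    have hcs := real_inner_le_norm (w n - u) (y n - ybar)
    have hn := hwne n
    have hgap2 : ε / 2 * ‖w n - u‖ < ⟪w n - u, y n - ybar⟫ := by
      rw [i1]
      simp only [hδdef] at h1
      linarith
    nlinarith [hgap2, hcs, hn]
  -- boundedness of the near maximizers
  have hbound : ∀ n, r / 4 * ‖y n‖ ≤ M - v u + ‖ybar‖ * (r / 4) + ε * (r / 4) / 2 := by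
    intro n
    set z : EuclideanSpace ℝ (Fin K) := (‖y n‖)⁻¹ • y n with hzdef
    have hz1 : ‖z‖ ≤ 1 := by
      rcases eq_or_ne (y n) 0 with h | h
      · simp [hzdef, h]
      · rw [hzdef, norm_smul, norm_inv, norm_norm, inv_mul_cancel₀ (norm_ne_zero_iff.mpr h)]
    set w' : EuclideanSpace ℝ (Fin K) := w n + (r / 4) • z with hw'def
    have hw'ball : w' ∈ closedBall u (r / 2) := by
      rw [mem_closedBall]
      calc dist w' u ≤ dist w' (w n) + dist (w n) u := dist_triangle _ _ _
        _ ≤ r / 4 * ‖z‖ + r / 4 := by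
            rw [hw'def, dist_self_add_left]
            have := (mem_ball.mp (hwball n)).le
            rw [norm_smul, Real.norm_eq_abs, abs_of_nonneg (by linarith : (0:ℝ) ≤ r / 4)]
            linarith
        _ ≤ r / 2 := by nlinarith
    have hw'U : w' ∈ U := hballU (hsub hw'ball)
    have hkey := key2 w' hw'U (y n) (hyB n) (d n) (hd n)
    have hMw' : v w' ≤ M := hM hw'ball
    have hinner : ⟪w', y n⟫ = ⟪w n, y n⟫ + (r / 4) * ‖y n‖ := by
      rw [hw'def, inner_add_left, real_inner_smul_left, hzdef, real_inner_smul_left,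
        real_inner_self_eq_norm_sq]
      rcases eq_or_ne (y n) 0 with h | h
      · simp [h]
      · have hne : ‖y n‖ ≠ 0 := norm_ne_zero_iff.mpr h
        field_simp
    have h1 := hlt n
    have h2 := hlow (w n) (hwU n)
    have hcs : ⟪w n - u, ybar⟫ ≥ -(‖w n - u‖ * ‖ybar‖) := by
      have ha := abs_real_inner_le_norm (w n - u) ybar
      have hb := neg_abs_le (⟪w n - u, ybar⟫)
      linarith
    have hnorm : ‖w n - u‖ ≤ r / 4 := by
      have := mem_ball.mp (hwball n)
      rw [dist_eq_norm] at this
      linarith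
    have hδle : δ n ≤ ε * (r / 4) / 2 := by
      simp only [hδdef]
      nlinarith [hnorm, hε.le]
    nlinarith [mul_le_mul_of_nonneg_left hnorm (norm_nonneg ybar), hkey, hMw', hinner, h1, h2,
      hcs, hδle]
  -- extract a convergent subsequence of near maximizers
  set R : ℝ := (M - v u + ‖ybar‖ * (r / 4) + ε * (r / 4) / 2) * (4 / r) with hRdef
  have hymem : ∀ n, y n ∈ closedBall (0 : EuclideanSpace ℝ (Fin K)) R := by
    intro n
    rw [mem_closedBall, dist_zero_right, hRdef]
    have hb := hbound n
    calc ‖y n‖ = (r / 4 * ‖y n‖) * (4 / r) := by field_simp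
      _ ≤ (M - v u + ‖ybar‖ * (r / 4) + ε * (r / 4) / 2) * (4 / r) :=
          mul_le_mul_of_nonneg_right hb (by positivity)
  obtain ⟨yl, _, φ, hφ, hφtend⟩ :=
    (isCompact_closedBall (0 : EuclideanSpace ℝ (Fin K)) R).tendsto_subseq hymem
  have hylB : yl ∈ B :=
    hBclosed.mem_of_tendsto hφtend (Filter.Eventually.of_forall fun n => hyB _)
  -- pass to the limit in the hypograph
  set t : ℕ → ℝ := fun n => v (w n) - δ n - ⟪w n, y n⟫ with htdef
  have htmem : ∀ n, (y n, t n) ∈ {p : EuclideanSpace ℝ (Fin K) × ℝ | (p.2 : EReal) ≤ D p.1} := by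
    intro n
    have h1 := hlt n
    have hle : t n ≤ d n := by simp only [htdef]; linarith
    show ((t n : ℝ) : EReal) ≤ D (y n)
    rw [hd n]
    exact_mod_cast hle
  have hwφtend : Tendsto (fun n => w (φ n)) atTop (nhds u) := hwtend.comp hφ.tendsto_atTop
  have hnormtend : Tendsto (fun n => ‖w (φ n) - u‖) atTop (nhds 0) := by
    have h : Tendsto (fun n => w (φ n) - u) atTop (nhds 0) := by
      simpa using hwφtend.sub_const u
    simpa using h.norm
  have hvtend : Tendsto (fun n => v (w (φ n))) atTop (nhds (v u)) :=
    hcontu.tendsto.comp hwφtend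
  have hδtend : Tendsto (fun n => δ (φ n)) atTop (nhds 0) := by
    have h : Tendsto (fun n => ε * ‖w (φ n) - u‖ / 2) atTop (nhds (ε * 0 / 2)) :=
      (hnormtend.const_mul ε).div_const 2
    simpa [hδdef] using h
  have hinnertend : Tendsto (fun n => ⟪w (φ n), y (φ n)⟫) atTop (nhds (⟪u, yl⟫)) :=
    hwφtend.inner hφtend
  have httend : Tendsto (fun n => t (φ n)) atTop (nhds (v u - ⟪u, yl⟫)) := by
    have h := (hvtend.sub hδtend).sub hinnertend
    simpa [htdef] using h
  have hlimmem : (yl, v u - ⟪u, yl⟫) ∈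
      {p : EuclideanSpace ℝ (Fin K) × ℝ | (p.2 : EReal) ≤ D p.1} :=
    hhypoClosed.mem_of_tendsto (hφtend.prodMk_nhds httend)
      (Filter.Eventually.of_forall fun n => htmem (φ n))
  -- yl is a maximizer, hence equals ybar
  have hbotl : D yl ≠ ⊥ := by
    intro hb
    have h := hlimmem
    rw [Set.mem_setOf_eq, hb] at h
    exact (EReal.coe_ne_bot _) (le_bot_iff.mp h)
  obtain ⟨dl, hdl⟩ : ∃ dl : ℝ, D yl = (dl : EReal) :=
    ⟨(D yl).toReal, (EReal.coe_toReal (hDtop yl).ne hbotl).symm⟩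
  have e1 : v u - ⟪u, yl⟫ ≤ dl := by
    have h := hlimmem
    rw [Set.mem_setOf_eq, hdl] at h
    exact_mod_cast h
  have e2 : ⟪u, yl⟫ + dl ≤ v u := key2 u hu yl hylB dl hdl
  have hyleq : yl = ybar := by
    refine huniq yl hylB ?_
    rw [hdl, ← EReal.coe_add]
    exact_mod_cast (by linarith : ⟪u, yl⟫ + dl = v u)
  -- contradiction with hfar
  rw [hyleq] at hφtend
  have htend0 : Tendsto (fun n => ‖y (φ n) - ybar‖) atTop (nhds 0) := by
    have h : Tendsto (fun n => y (φ n) - ybar) atTop (nhds 0) := by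
      simpa using hφtend.sub_const ybar
    simpa using h.norm
  obtain ⟨n, hn⟩ := (htend0.eventually (gt_mem_nhds (half_pos hε))).exists
  exact absurd (hfar (φ n)) (by linarith)
end

section
/- Let M ≥ 1 and let V : (Fin K → ℝ) → ℝ be (M+1)-times continuously differentiable on a neighborhood of the origin. Fix β ∈ Ω, a good k, and tuples γ : Fin M → Fin K and ξ with ξ m : Fin (d (γ m)) for each m. Define g : Ω → ℝ by g(x) = ∂_k V (u(x, β)). Then the iterated partial derivative of g at x = 0 taken with respect to the covariate coordinates (γ 0, ξ 0), …, (γ (M−1), ξ (M−1)) exists and equals ∂_{(γ,k)} V(0) · ∏_{m : Fin M} β (γ m) (ξ m), where (γ,k) is the (M+1)-tuple of good indices appending k to γ. (Lemma: iterated differentiation of the conditional mean choice at zero covariates factors into a derivative of V at 0 times a product of random coefficients.) -/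
open MeasureTheory

/-- Partial derivative of `V` in its `k`-th coordinate. -/
noncomputable def pV {K : ℕ} (V : (Fin K → ℝ) → ℝ) (k : Fin K) : (Fin K → ℝ) → ℝ :=
  fun w => fderiv ℝ V w (Pi.single k 1)

/-- The utility index map `u(x, β) k = ∑ ℓ, β k ℓ * x k ℓ`. -/
def idx {K : ℕ} {d : Fin K → ℕ} (x β : Coeff K d) : Fin K → ℝ :=
  fun k => ∑ ℓ : Fin (d k), β k ℓ * x k ℓ

/-- `idx · β` as a linear map. -/
noncomputable def idxL {K : ℕ} {d : Fin K → ℕ} (β : Coeff K d) :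
    Coeff K d →L[ℝ] (Fin K → ℝ) :=
  LinearMap.toContinuousLinearMap
  { toFun := fun x => idx x β
    map_add' := by
      intro x y; funext k'; simp [idx, mul_add, Finset.sum_add_distrib]
    map_smul' := by
      intro c x; funext k'
      simp [idx, Finset.mul_sum, mul_left_comm] }

set_option synthInstance.maxHeartbeats 1000000 in
/-- Lemma: iterated differentiation of the conditional mean choice at zero covariates factors
into a derivative of `V` at `0` times a product of random coefficients. -/
theorem stmt7 {K : ℕ} (hK : 0 < K) {d : Fin K → ℕ} (hd : ∀ k, 0 < d k)
    (M : ℕ) (hM : 1 ≤ M)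
    (V : (Fin K → ℝ) → ℝ) (hV : ContDiffAt ℝ (M + 1) V 0)
    (β : Coeff K d) (k : Fin K)
    (γ : Fin M → Fin K) (ξ : ∀ m, Fin (d (γ m))) :
    ContDiffAt ℝ M (fun x : Coeff K d => pV V k (idx x β)) 0 ∧
    iteratedFDeriv ℝ M (fun x : Coeff K d => pV V k (idx x β)) 0
        (fun m => Pi.single (γ m) (Pi.single (ξ m) 1))
      = dV (M + 1) V (Fin.snoc γ k) * ∏ m : Fin M, β (γ m) (ξ m) := by
  classical
  set L : Coeff K d →L[ℝ] (Fin K → ℝ) := idxL β with hLdef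
  have hLapp : ∀ x : Coeff K d, L x = idx x β := fun _ => rfl
  have hL0 : L 0 = 0 := map_zero L
  set A : ((Fin K → ℝ) →L[ℝ] ℝ) →L[ℝ] ℝ :=
    ContinuousLinearMap.apply ℝ ℝ (Pi.single k 1) with hAdef
  have hpVeq : pV V k = A ∘ fderiv ℝ V := rfl
  have hgeq : (fun x : Coeff K d => pV V k (idx x β)) = (A ∘ fderiv ℝ V) ∘ L := rfl
  -- smoothness of fderiv V at 0
  have hf' : ContDiffAt ℝ M (fderiv ℝ V) 0 := hV.fderiv_right le_rfl
  have hpV : ContDiffAt ℝ M (pV V k) 0 := by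
    rw [hpVeq]
    exact A.contDiff.contDiffAt.comp 0 hf'
  have hpV' : ContDiffAt ℝ M (pV V k) (L 0) := by rw [hL0]; exact hpV
  have hg : ContDiffAt ℝ M (fun x : Coeff K d => pV V k (idx x β)) 0 := by
    rw [hgeq, ← hpVeq]
    exact hpV'.comp 0 L.contDiff.contDiffAt
  refine ⟨hg, ?_⟩
  -- get an open neighborhood where V is C^{M+1}
  obtain ⟨u, hu, hVu⟩ := hV.contDiffOn le_rfl (by simp)
  set U := interior u with hUdef
  have hU : IsOpen U := isOpen_interior
  have h0U : (0 : Fin K → ℝ) ∈ U := mem_interior_iff_mem_nhds.2 hu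
  have hVU : ContDiffOn ℝ (M + 1) V U := hVu.mono interior_subset
  have hfd : ContDiffOn ℝ M (fderiv ℝ V) U := hVU.fderiv_of_isOpen hU le_rfl
  have hpVU : ContDiffOn ℝ M (A ∘ fderiv ℝ V) U := A.contDiff.comp_contDiffOn hfd
  have hW : IsOpen (L ⁻¹' U) := hU.preimage L.continuous
  have h0W : (0 : Coeff K d) ∈ L ⁻¹' U := by simpa [hL0] using h0U
  -- step 1 : global iterated derivative to within, compose with L
  have step1 : iteratedFDeriv ℝ M (fun x : Coeff K d => pV V k (idx x β)) 0
      = (iteratedFDerivWithin ℝ M (A ∘ fderiv ℝ V) U (L 0)).compContinuousLinearMap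
          (fun _ => L) := by
    rw [hgeq, ← iteratedFDerivWithin_of_isOpen M hW h0W]
    exact L.iteratedFDerivWithin_comp_right hpVU hU.uniqueDiffOn hW.uniqueDiffOn
      (by rw [hL0]; exact h0U) le_rfl
  -- step 2 : pull A out, go back to global derivative of fderiv V
  have step2 : iteratedFDerivWithin ℝ M (A ∘ fderiv ℝ V) U (L 0)
      = A.compContinuousMultilinearMap (iteratedFDeriv ℝ M (fderiv ℝ V) 0) := by
    rw [hL0, A.iteratedFDerivWithin_comp_left (hfd 0 h0U) hU.uniqueDiffOn h0U le_rfl,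
      iteratedFDerivWithin_of_isOpen M hU h0U]
  -- the image of the basis vectors under L
  have hLv : ∀ m : Fin M, L (Pi.single (γ m) (Pi.single (ξ m) 1))
      = β (γ m) (ξ m) • (Pi.single (γ m) 1 : Fin K → ℝ) := by
    intro m
    funext k'
    rw [hLapp]
    rcases eq_or_ne k' (γ m) with h | h
    · subst h
      simp [idx, Pi.single_apply, Finset.sum_ite_eq']
    · simp [idx, Pi.single_eq_of_ne h]
  -- the relation between iterated derivative of fderiv V and dV
  have hsucc : A (iteratedFDeriv ℝ M (fderiv ℝ V) 0 (fun m => Pi.single (γ m) 1))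
      = dV (M + 1) V (Fin.snoc γ k) := by
    show iteratedFDeriv ℝ M (fderiv ℝ V) 0 (fun m => Pi.single (γ m) 1) (Pi.single k 1)
      = dV (M + 1) V (Fin.snoc γ k)
    set σ : Fin (M + 1) → Fin K := Fin.snoc γ k with hσ
    rw [dV, iteratedFDeriv_succ_apply_right]
    have h1 : ∀ i : Fin M,
        Fin.init (fun i : Fin (M + 1) => (Pi.single (σ i) 1 : Fin K → ℝ)) i
          = Pi.single (γ i) 1 := fun i => by simp [Fin.init, hσ]
    have h2 : σ (Fin.last M) = k := by simp [hσ]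
    rw [funext h1, h2]
  calc iteratedFDeriv ℝ M (fun x : Coeff K d => pV V k (idx x β)) 0
        (fun m => Pi.single (γ m) (Pi.single (ξ m) 1))
      = A (iteratedFDeriv ℝ M (fderiv ℝ V) 0
          (fun m => L (Pi.single (γ m) (Pi.single (ξ m) 1)))) := by
        rw [step1, step2]
        rfl
    _ = A (iteratedFDeriv ℝ M (fderiv ℝ V) 0
          (fun m => β (γ m) (ξ m) • (Pi.single (γ m) 1 : Fin K → ℝ))) := by
        simp only [hLv]
    _ = (∏ m : Fin M, β (γ m) (ξ m)) •
          A (iteratedFDeriv ℝ M (fderiv ℝ V) 0 (fun m => Pi.single (γ m) 1)) := by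
        rw [ContinuousMultilinearMap.map_smul_univ, A.map_smul]
    _ = dV (M + 1) V (Fin.snoc γ k) * ∏ m : Fin M, β (γ m) (ξ m) := by
        rw [smul_eq_mul, mul_comm, hsucc]
end

section
/- Let M ≥ 1, let ν be a compactly supported probability measure on Ω, and let V : (Fin K → ℝ) → ℝ be (M+1)-times continuously differentiable on all of (Fin K → ℝ). Define Ȳ_k(x) := ∫ ∂_k V (u(x, β)) dν(β). Let (γ, ξ) and (δ, η) be two M-tuples of good indices with characteristic indices (ξ m : Fin (d (γ m)), η m : Fin (d (δ m))), and let k and j be goods such that each good index occurs the same number of times in the length-(M+1) lists (γ 0, …, γ (M−1), k) and (δ 0, …, δ (M−1), j). Then ∂_{(γ,ξ)} Ȳ_k(0) · moment_ν(δ,η) = ∂_{(δ,η)} Ȳ_j(0) · moment_ν(γ,ξ), where ∂_{(γ,ξ)} Ȳ_k(0) denotes the iterated partial derivative of Ȳ_k at x = 0 with respect to the covariate coordinates (γ m, ξ m), and moment_ν(γ,ξ) is the moment at the M-tuple τ m = ⟨γ m, ξ m⟩. In particular, if moment_ν(δ,η) ≠ 0 and ∂_{(δ,η)} Ȳ_j(0)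 ≠ 0, the ratio of the derivatives equals the ratio of the moments. (Lemma: symmetry of mixed partials of V implies that ratios of derivatives of the average structural function identify ratios of moments.) -/
set_option synthInstance.maxHeartbeats 1000000
set_option maxHeartbeats 1000000

open MeasureTheory

/-- Iterated partial derivative at `x = 0` of a function of covariates, along the covariate
coordinates `(τ m).1, (τ m).2`. -/
noncomputable def dOmega {K : ℕ} {d : Fin K → ℕ} (M : ℕ) (g : Coeff K d → ℝ)
    (τ : Fin M → Σ k : Fin K, Fin (d k)) : ℝ :=
  iteratedFDeriv ℝ M g 0 fun m => Pi.single (τ m).1 (Pi.single (τ m).2 1)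

section Symm

variable {E : Type} [NormedAddCommGroup E] [NormedSpace ℝ E]

lemma iFD_apply_pair {n : ℕ} {F : Type} [NormedAddCommGroup F] [NormedSpace ℝ F]
    (g : E → (E →L[ℝ] E →L[ℝ] F)) (hg : ContDiff ℝ n g) (x : E) (w : Fin n → E) (a b : E) :
    iteratedFDeriv ℝ n g x w a b = iteratedFDeriv ℝ n (fun y => g y a b) x w := by
  have hcomp := ContinuousLinearMap.iteratedFDeriv_comp_left
    ((ContinuousLinearMap.apply ℝ F b).comp (ContinuousLinearMap.apply ℝ (E →L[ℝ] F) a))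
    (hg.contDiffAt (x := x)) (le_refl (n : WithTop ℕ∞))
  have h1 : (fun y => g y a b)
      = ⇑((ContinuousLinearMap.apply ℝ F b).comp (ContinuousLinearMap.apply ℝ (E →L[ℝ] F) a))
        ∘ g := rfl
  rw [h1, hcomp]
  rfl

/-- Swap of the last two arguments of an iterated derivative. -/
lemma iFD_snoc_swap {n : ℕ} {F : Type} [NormedAddCommGroup F] [NormedSpace ℝ F]
    (f : E → F) (hf : ContDiff ℝ (n + 2) f) (x : E) (w : Fin n → E) (a b : E) :
    iteratedFDeriv ℝ (n + 2) f x (Fin.snoc (Fin.snoc w a) b)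
      = iteratedFDeriv ℝ (n + 2) f x (Fin.snoc (Fin.snoc w b) a) := by
  have hf1 : ContDiff ℝ (n + 1) (fderiv ℝ f) :=
    hf.fderiv_right (by exact_mod_cast le_refl (n + 2 : ℕ))
  have hf2 : ContDiff ℝ n (fderiv ℝ (fderiv ℝ f)) :=
    hf1.fderiv_right (by exact_mod_cast le_refl (n + 1 : ℕ))
  have key : ∀ a b : E,
      iteratedFDeriv ℝ (n + 2) f x (Fin.snoc (Fin.snoc w a) b)
        = iteratedFDeriv ℝ n (fun y => fderiv ℝ (fderiv ℝ f) y a b) x w := by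
    intro a b
    rw [iteratedFDeriv_succ_apply_right]
    simp only [Fin.init_snoc, Fin.snoc_last]
    rw [iteratedFDeriv_succ_apply_right]
    simp only [Fin.init_snoc, Fin.snoc_last]
    exact iFD_apply_pair _ hf2 x w a b
  rw [key, key]
  have : (fun y => fderiv ℝ (fderiv ℝ f) y a b) = (fun y => fderiv ℝ (fderiv ℝ f) y b a) :=
    funext fun y => ((hf.contDiffAt).isSymmSndFDerivAt
      (by rw [minSmoothness_of_isRCLikeNormedField]; exact_mod_cast (by norm_num : (2:ℕ∞) ≤ (n:ℕ∞) + 2))).eq a b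
  rw [this]

end Symm

section Swap
variable {E : Type} [NormedAddCommGroup E] [NormedSpace ℝ E]

lemma iFD_swap : ∀ (n : ℕ) (F : Type) [NormedAddCommGroup F] [NormedSpace ℝ F]
    (f : E → F), ContDiff ℝ n f → ∀ (x : E) (v : Fin n → E) (p q : Fin n),
    iteratedFDeriv ℝ n f x (v ∘ Equiv.swap p q) = iteratedFDeriv ℝ n f x v := by
  intro n
  induction n with
  | zero => intro F _ _ f hf x v p q; exact absurd p.2 (by omega)
  | succ n ih =>
    intro F _ _ f hf x v p q
    rcases eq_or_ne p q with rfl | hpq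
    · simp [Equiv.swap_self]
    have hfd : ContDiff ℝ n (fderiv ℝ f) :=
      hf.fderiv_right (by exact_mod_cast le_refl (n + 1 : ℕ))
    -- swaps of two non-last positions
    have hcast : ∀ (w : Fin (n+1) → E) (p' q' : Fin n),
        iteratedFDeriv ℝ (n+1) f x (w ∘ Equiv.swap p'.castSucc q'.castSucc)
          = iteratedFDeriv ℝ (n+1) f x w := by
      intro w p' q'
      rw [iteratedFDeriv_succ_apply_right, iteratedFDeriv_succ_apply_right]
      have h1 : Fin.init (w ∘ Equiv.swap p'.castSucc q'.castSucc)
          = Fin.init w ∘ Equiv.swap p' q' := by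
        funext i
        simp only [Fin.init, Function.comp_apply]
        rw [(Fin.castSucc_injective n).swap_apply]
      have h2 : (w ∘ Equiv.swap p'.castSucc q'.castSucc) (Fin.last n) = w (Fin.last n) := by
        simp only [Function.comp_apply]
        rw [Equiv.swap_apply_of_ne_of_ne (Fin.castSucc_lt_last p').ne'
          (Fin.castSucc_lt_last q').ne']
      rw [h1, h2, ih _ (fderiv ℝ f) hfd x (Fin.init w) p' q']
    -- main case: swapping some position with the last one
    have main : ∀ (w : Fin (n+1) → E) (p' : Fin (n+1)), p' ≠ Fin.last n →
        iteratedFDeriv ℝ (n+1) f x (w ∘ Equiv.swap p' (Fin.last n))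
          = iteratedFDeriv ℝ (n+1) f x w := by
      intro w p' hp'
      rcases Nat.eq_zero_or_pos n with rfl | hn
      · exact absurd (Fin.ext (by omega)) hp'
      obtain ⟨m, rfl⟩ : ∃ m, n = m + 1 := ⟨n - 1, by omega⟩
      obtain ⟨p'', rfl⟩ := Fin.exists_castSucc_eq.2 hp'
      -- the adjacent case: swapping the last two positions
      have hadj : ∀ w : Fin (m+2) → E,
          iteratedFDeriv ℝ (m+2) f x (w ∘ Equiv.swap (Fin.last m).castSucc (Fin.last (m+1)))
            = iteratedFDeriv ℝ (m+2) f x w := by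
        intro w
        have e1 : w = Fin.snoc (Fin.snoc (Fin.init (Fin.init w))
            (w (Fin.last m).castSucc)) (w (Fin.last (m+1))) := by
          conv_lhs => rw [← Fin.snoc_init_self w]
          congr 1
          conv_lhs => rw [← Fin.snoc_init_self (Fin.init w)]
          simp [Fin.init]
        have e2 : w ∘ Equiv.swap (Fin.last m).castSucc (Fin.last (m+1))
            = Fin.snoc (Fin.snoc (Fin.init (Fin.init w))
              (w (Fin.last (m+1)))) (w (Fin.last m).castSucc) := by
          funext i
          simp only [Function.comp_apply]
          rcases eq_or_ne i (Fin.last (m+1)) with rfl | hi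
          · rw [Equiv.swap_apply_right, Fin.snoc_last]
          · obtain ⟨i', rfl⟩ := Fin.exists_castSucc_eq.2 hi
            rcases eq_or_ne i' (Fin.last m) with rfl | hi'
            · rw [Equiv.swap_apply_left, Fin.snoc_castSucc, Fin.snoc_last]
            · rw [Equiv.swap_apply_of_ne_of_ne
                (fun h => hi' (Fin.castSucc_injective _ h)) (Fin.castSucc_lt_last i').ne,
                Fin.snoc_castSucc]
              obtain ⟨i'', rfl⟩ := Fin.exists_castSucc_eq.2 hi'
              rw [Fin.snoc_castSucc]
              simp [Fin.init]
        rw [e2, iFD_snoc_swap f (by exact_mod_cast hf) x, ← e1]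
      rcases eq_or_ne p'' (Fin.last m) with rfl | hp''
      · exact hadj w
      · -- conjugate by the swap of p'' and the second-to-last position
        set p : Fin (m+2) := p''.castSucc with hp
        set r : Fin (m+2) := (Fin.last m).castSucc with hr
        set q : Fin (m+2) := Fin.last (m+1) with hqdef
        have hpr : p ≠ r := fun h => hp'' (Fin.castSucc_injective _ h)
        have hpq2 : p ≠ q := (Fin.castSucc_lt_last p'').ne
        have hrq : r ≠ q := (Fin.castSucc_lt_last _).ne
        have hkey := Equiv.swap_mul_swap_mul_swap (x := q) (y := p) (z := r)
          (Ne.symm hpq2) (Ne.symm hrq)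
        have hconj : Equiv.swap p q = Equiv.swap p r * Equiv.swap r q * Equiv.swap p r := by
          rw [Equiv.swap_comm, ← hkey]
          simp [mul_assoc, Equiv.swap_mul_self, Equiv.swap_mul_self_mul, mul_one]
        have hw : w ∘ ⇑(Equiv.swap p q)
            = (((w ∘ ⇑(Equiv.swap p r)) ∘ ⇑(Equiv.swap r q)) ∘ ⇑(Equiv.swap p r)) := by
          rw [hconj]; rfl
        rw [hw, hcast _ p'' (Fin.last m), hadj, hcast _ p'' (Fin.last m)]
    -- if neither index is the last one, we are done
    rcases eq_or_ne q (Fin.last n) with rfl | hq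
    swap
    · rcases eq_or_ne p (Fin.last n) with rfl | hp
      · rw [show Equiv.swap (Fin.last n) q = Equiv.swap q (Fin.last n) from Equiv.swap_comm _ _]
        exact main v q hq
      · obtain ⟨p', rfl⟩ := Fin.exists_castSucc_eq.2 hp
        obtain ⟨q', rfl⟩ := Fin.exists_castSucc_eq.2 hq
        exact hcast v p' q'
    · exact main v p hpq

lemma iFD_perm {n : ℕ} {F : Type} [NormedAddCommGroup F] [NormedSpace ℝ F]
    (f : E → F) (hf : ContDiff ℝ n f) (x : E) (σ : Equiv.Perm (Fin n)) (v : Fin n → E) :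
    iteratedFDeriv ℝ n f x (v ∘ σ) = iteratedFDeriv ℝ n f x v := by
  have H : ∀ u : Fin n → E, iteratedFDeriv ℝ n f x (u ∘ σ) = iteratedFDeriv ℝ n f x u := by
    refine Equiv.Perm.swap_induction_on σ (fun u => by simp) ?_
    intro ρ i j hij ihρ u
    have : u ∘ ⇑(Equiv.swap i j * ρ) = (u ∘ Equiv.swap i j) ∘ ρ := rfl
    rw [this, ihρ, iFD_swap n F f hf x u i j]
  exact H v

end Swap

section Exchange
open Metric

variable {P E : Type}
  [NormedAddCommGroup P] [NormedSpace ℝ P]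
  [MeasurableSpace P] [OpensMeasurableSpace P] [SecondCountableTopology P]
  [NormedAddCommGroup E] [NormedSpace ℝ E] [ProperSpace E]
  {μ : Measure P} [IsFiniteMeasure μ] {C : Set P}

lemma integrable_of_cont (hC : IsCompact C) (hμC : μ Cᶜ = 0)
    {Y : Type} [NormedAddCommGroup Y] (g : P → Y) (hg : Continuous g) :
    Integrable g μ := by
  obtain ⟨B, hB⟩ := hC.exists_bound_of_continuousOn hg.continuousOn
  refine Integrable.mono' (integrable_const B) hg.aestronglyMeasurable ?_
  have hae : ∀ᵐ p ∂μ, p ∈ C := by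
    rw [ae_iff]
    simpa [Set.compl_def] using hμC
  filter_upwards [hae] with p hp using hB p hp

lemma iFD_integral (hC : IsCompact C) (hμC : μ Cᶜ = 0) :
    ∀ (i : ℕ) (Y : Type) [NormedAddCommGroup Y] [NormedSpace ℝ Y] [CompleteSpace Y]
    (H : P → E → Y), ContDiff ℝ i (Function.uncurry H) →
    Continuous (fun q : P × E => iteratedFDeriv ℝ i (H q.1) q.2) ∧
    ∀ x, iteratedFDeriv ℝ i (fun x' => ∫ p, H p x' ∂μ) x
      = ∫ p, iteratedFDeriv ℝ i (H p) x ∂μ := by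
  intro i
  induction i with
  | zero =>
    intro Y _ _ _ H hH
    have hcont : Continuous (Function.uncurry H) := hH.continuous
    have ha : Continuous (fun q : P × E => iteratedFDeriv ℝ 0 (H q.1) q.2) := by
      have : (fun q : P × E => iteratedFDeriv ℝ 0 (H q.1) q.2)
          = fun q => (continuousMultilinearCurryFin0 ℝ E Y).symm (H q.1 q.2) := rfl
      rw [this]
      exact (LinearIsometryEquiv.continuous _).comp hcont
    refine ⟨ha, fun x => ?_⟩
    refine ContinuousMultilinearMap.ext fun m => ?_
    have hint : Integrable (fun p => iteratedFDeriv ℝ 0 (H p) x) μ :=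
      integrable_of_cont hC hμC _ (ha.comp (Continuous.prodMk continuous_id continuous_const))
    rw [ContinuousMultilinearMap.integral_apply hint]
    simp only [iteratedFDeriv_zero_apply]
  | succ i ih =>
    intro Y _ _ _ H hH
    have hH1 : Differentiable ℝ (Function.uncurry H) :=
      hH.differentiable (by simp)
    set H' : P → E → (E →L[ℝ] Y) := fun p x => fderiv ℝ (H p) x with hH'def
    have hHp : ∀ p, ContDiff ℝ (i+1) (H p) := fun p =>
      hH.comp ((contDiff_const (c := p)).prodMk contDiff_id)
    have hfderiv_eq : ∀ p x, H' p x
        = (fderiv ℝ (Function.uncurry H) (p, x)).comp (ContinuousLinearMap.inr ℝ P E) := by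
      intro p x
      have h1 : HasFDerivAt (fun x' : E => (p, x')) (ContinuousLinearMap.inr ℝ P E) x :=
        (hasFDerivAt_const p x).prodMk (hasFDerivAt_id x)
      exact ((hH1 (p, x)).hasFDerivAt.comp x h1).fderiv
    have hH' : ContDiff ℝ i (Function.uncurry H') := by
      have h0 : ContDiff ℝ i (fderiv ℝ (Function.uncurry H)) :=
        hH.fderiv_right (by exact_mod_cast le_refl (i+1 : ℕ))
      have h2 : ContDiff ℝ i (fun q : P × E =>
          (fderiv ℝ (Function.uncurry H) q).comp (ContinuousLinearMap.inr ℝ P E)) :=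
        h0.clm_comp contDiff_const
      have : Function.uncurry H' = fun q : P × E =>
          (fderiv ℝ (Function.uncurry H) q).comp (ContinuousLinearMap.inr ℝ P E) :=
        funext fun q => hfderiv_eq q.1 q.2
      rw [this]; exact h2
    obtain ⟨iha, ihb⟩ := ih (E →L[ℝ] Y) H' hH'
    have ha : Continuous (fun q : P × E => iteratedFDeriv ℝ (i+1) (H q.1) q.2) := by
      have : (fun q : P × E => iteratedFDeriv ℝ (i+1) (H q.1) q.2)
          = fun q => (continuousMultilinearCurryRightEquiv' ℝ i E Y).symm
              (iteratedFDeriv ℝ i (H' q.1) q.2) := by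
        funext q; rw [iteratedFDeriv_succ_eq_comp_right]; rfl
      rw [this]
      exact (LinearIsometryEquiv.continuous _).comp iha
    refine ⟨ha, fun x => ?_⟩
    have hae : ∀ᵐ p ∂μ, p ∈ C := by
      rw [ae_iff]; simpa [Set.compl_def] using hμC
    have hFderiv : ∀ x₀ : E, HasFDerivAt (fun x' => ∫ p, H p x' ∂μ) (∫ p, H' p x₀ ∂μ) x₀ := by
      intro x₀
      have hcont' : Continuous (Function.uncurry H') := hH'.continuous
      obtain ⟨B, hB⟩ := (hC.prod (isCompact_closedBall x₀ 1)).exists_bound_of_continuousOn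
        hcont'.continuousOn
      refine hasFDerivAt_integral_of_dominated_of_fderiv_le (F := fun x' p => H p x')
        (F' := fun x' p => H' p x') (bound := fun _ => B) (ball_mem_nhds x₀ one_pos) ?_ ?_ ?_ ?_ ?_ ?_
      · exact Filter.Eventually.of_forall fun x' =>
          (hH.continuous.comp (Continuous.prodMk continuous_id continuous_const)
            ).aestronglyMeasurable
      · exact integrable_of_cont hC hμC _
          (hH.continuous.comp (Continuous.prodMk continuous_id continuous_const))
      · exact (hcont'.comp (Continuous.prodMk continuous_id continuous_const)
          ).aestronglyMeasurable
      · filter_upwards [hae] with p hp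
        intro x' hx'
        exact hB (p, x') ⟨hp, ball_subset_closedBall hx'⟩
      · exact integrable_const B
      · exact Filter.Eventually.of_forall fun p x' _ =>
          (((hHp p).differentiable (by simp)) x'
            ).hasFDerivAt
    have hfd_eq : fderiv ℝ (fun x' => ∫ p, H p x' ∂μ) = fun x' => ∫ p, H' p x' ∂μ :=
      funext fun x₀ => (hFderiv x₀).fderiv
    refine ContinuousMultilinearMap.ext fun m => ?_
    have hint : Integrable (fun p => iteratedFDeriv ℝ i (H' p) x) μ :=
      integrable_of_cont hC hμC _ (iha.comp (Continuous.prodMk continuous_id continuous_const))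
    have hint1 : Integrable (fun p => iteratedFDeriv ℝ (i+1) (H p) x) μ :=
      integrable_of_cont hC hμC _ (ha.comp (Continuous.prodMk continuous_id continuous_const))
    rw [iteratedFDeriv_succ_apply_right, hfd_eq, ihb x,
      ContinuousMultilinearMap.integral_apply hint1]
    have hpt : ∀ p, iteratedFDeriv ℝ (i+1) (H p) x m
        = (iteratedFDeriv ℝ i (H' p) x) (Fin.init m) (m (Fin.last i)) := fun p =>
      iteratedFDeriv_succ_apply_right m
    simp only [hpt]
    set L : (ContinuousMultilinearMap ℝ (fun _ : Fin i => E) (E →L[ℝ] Y)) →L[ℝ] Y :=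
      (ContinuousLinearMap.apply ℝ Y (m (Fin.last i))).comp
        (ContinuousMultilinearMap.apply ℝ (fun _ : Fin i => E) (E →L[ℝ] Y) (Fin.init m))
      with hL
    exact (L.integral_comp_comm hint).symm

end Exchange

section App

/-- The index map as a continuous linear map in `x`. -/
noncomputable def idxCLM {K : ℕ} {d : Fin K → ℕ} (β : Coeff K d) :
    Coeff K d →L[ℝ] (Fin K → ℝ) :=
  LinearMap.toContinuousLinearMap
    { toFun := fun x => idx x β
      map_add' := by
        intro x y; funext k'; simp [idx, mul_add, Finset.sum_add_distrib]
      map_smul' := by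
        intro c x; funext k'
        simp [idx, Finset.mul_sum, mul_comm, mul_left_comm] }

lemma idxCLM_apply {K : ℕ} {d : Fin K → ℕ} (β x : Coeff K d) : idxCLM β x = idx x β := rfl

lemma idxCLM_single {K : ℕ} {d : Fin K → ℕ} (β : Coeff K d) (i : Fin K) (ℓ : Fin (d i)) :
    idxCLM β (Pi.single i (Pi.single ℓ 1)) = β i ℓ • (Pi.single i 1 : Fin K → ℝ) := by
  funext k'
  rcases eq_or_ne k' i with rfl | hk
  · simp [idxCLM_apply, idx, Pi.single_apply, mul_ite, Finset.sum_ite_eq']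
  · simp [idxCLM_apply, idx, Pi.single_eq_of_ne hk]

lemma exists_comp_eq {N K : ℕ} (a b : Fin N → Fin K)
    (h : ∀ i, (Finset.univ.filter fun m => a m = i).card
      = (Finset.univ.filter fun m => b m = i).card) :
    ∃ σ : Equiv.Perm (Fin N), ∀ m, a (σ m) = b m := by
  have efib : ∀ i : Fin K, {x // b x = i} ≃ {x // a x = i} := fun i =>
    Fintype.equivOfCardEq (by
      rw [Fintype.card_subtype, Fintype.card_subtype]
      exact (h i).symm)
  refine ⟨(Equiv.sigmaFiberEquiv b).symm.trans
    ((Equiv.sigmaCongrRight efib).trans (Equiv.sigmaFiberEquiv a)), fun m => ?_⟩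
  exact (efib (b m) ⟨m, rfl⟩).2

lemma pV_iFD {K M : ℕ} (V : (Fin K → ℝ) → ℝ) (hV : ContDiff ℝ (M + 1) V) (k : Fin K)
    (w : Fin M → (Fin K → ℝ)) :
    iteratedFDeriv ℝ M (pV V k) 0 w
      = iteratedFDeriv ℝ (M + 1) V 0 (Fin.snoc w (Pi.single k 1)) := by
  rw [iteratedFDeriv_succ_apply_right, Fin.init_snoc, Fin.snoc_last]
  have h : pV V k
      = ⇑(ContinuousLinearMap.apply ℝ ℝ ((Pi.single k 1 : Fin K → ℝ))) ∘ (fderiv ℝ V) := rfl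
  rw [h, ContinuousLinearMap.iteratedFDeriv_comp_left _ ((hV.fderiv_right le_rfl).contDiffAt (x := 0)) le_rfl]
  rfl

end App

/-- Lemma: symmetry of mixed partials of `V` implies that ratios of derivatives of the average
structural function identify ratios of moments. -/
theorem stmt9 {K : ℕ} (hK : 0 < K) {d : Fin K → ℕ} (hd : ∀ k, 0 < d k)
    (M : ℕ) (hM : 1 ≤ M)
    (ν : Measure (Coeff K d)) [IsProbabilityMeasure ν]
    (hνc : ∃ C : Set (Coeff K d), IsCompact C ∧ ν Cᶜ = 0)
    (V : (Fin K → ℝ) → ℝ) (hV : ContDiff ℝ (M + 1) V)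
    (Ybar : Fin K → Coeff K d → ℝ)
    (hYbar : ∀ k x, Ybar k x = ∫ β, pV V k (idx x β) ∂ν)
    (γ δ : Fin M → Fin K) (ξ : ∀ m, Fin (d (γ m))) (η : ∀ m, Fin (d (δ m)))
    (k j : Fin K)
    (hcount : ∀ i : Fin K,
      (Finset.univ.filter fun m : Fin (M + 1) => (Fin.snoc γ k : Fin (M + 1) → Fin K) m = i).card
        = (Finset.univ.filter fun m : Fin (M + 1) => (Fin.snoc δ j : Fin (M + 1) → Fin K) m = i).card) :
    dOmega M (Ybar k) (fun m => ⟨γ m, ξ m⟩) * moment ν (fun m => ⟨δ m, η m⟩)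
      = dOmega M (Ybar j) (fun m => ⟨δ m, η m⟩) * moment ν (fun m => ⟨γ m, ξ m⟩) ∧
    (moment ν (fun m => ⟨δ m, η m⟩) ≠ 0 →
      dOmega M (Ybar j) (fun m => ⟨δ m, η m⟩) ≠ 0 →
      dOmega M (Ybar k) (fun m => ⟨γ m, ξ m⟩) / dOmega M (Ybar j) (fun m => ⟨δ m, η m⟩)
        = moment ν (fun m => ⟨γ m, ξ m⟩) / moment ν (fun m => ⟨δ m, η m⟩)) := by
  obtain ⟨C, hC, hνC⟩ := hνc
  have hpV : ∀ k : Fin K, ContDiff ℝ M (pV V k) := fun k =>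
    (hV.fderiv_right le_rfl).clm_apply contDiff_const
  have hidx : ContDiff ℝ M (fun q : Coeff K d × Coeff K d => idx q.2 q.1) := by
    apply contDiff_pi.2
    intro k'
    apply ContDiff.sum
    intro ℓ _
    exact (contDiff_pi.1 (contDiff_pi.1 contDiff_fst k') ℓ).mul
      (contDiff_pi.1 (contDiff_pi.1 contDiff_snd k') ℓ)
  have hH : ∀ k : Fin K,
      ContDiff ℝ M (Function.uncurry (fun β x : Coeff K d => pV V k (idx x β))) := fun k =>
    (hpV k).comp hidx
  -- the universal computation
  have key : ∀ (k : Fin K) (c : Fin M → Fin K) (t : ∀ m, Fin (d (c m))),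
      dOmega M (Ybar k) (fun m => ⟨c m, t m⟩)
        = (moment ν (fun m => ⟨c m, t m⟩)) *
          iteratedFDeriv ℝ (M + 1) V 0 (fun i : Fin (M + 1) => Pi.single ((Fin.snoc c k : Fin (M+1) → Fin K) i) (1:ℝ)) := by
    intro k c t
    have hYk : Ybar k = fun x => ∫ β, pV V k (idx x β) ∂ν := funext fun x => hYbar k x
    have hex := (iFD_integral hC hνC M ℝ (fun β x : Coeff K d => pV V k (idx x β)) (hH k)).2 0
    have hcont := (iFD_integral hC hνC M ℝ (fun β x : Coeff K d => pV V k (idx x β)) (hH k)).1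
    beta_reduce at hex hcont
    unfold dOmega
    rw [hYk, hex]
    have hint : Integrable
        (fun β : Coeff K d => iteratedFDeriv ℝ M (fun x => pV V k (idx x β)) 0) ν :=
      integrable_of_cont hC hνC _ (hcont.comp (Continuous.prodMk continuous_id continuous_const))
    rw [ContinuousMultilinearMap.integral_apply hint]
    have hpt : ∀ β : Coeff K d,
        iteratedFDeriv ℝ M (fun x => pV V k (idx x β)) 0
          (fun m => Pi.single (c m) (Pi.single (t m) 1))
        = (∏ m, β (c m) (t m)) •
            iteratedFDeriv ℝ M (pV V k) 0 (fun m => (Pi.single (c m) 1 : Fin K → ℝ)) := by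
      intro β
      have hcomp : (fun x => pV V k (idx x β)) = (pV V k) ∘ (idxCLM β) := rfl
      rw [hcomp, ContinuousLinearMap.iteratedFDeriv_comp_right (idxCLM β) (hpV k) 0 le_rfl]
      rw [ContinuousMultilinearMap.compContinuousLinearMap_apply, map_zero]
      have hvals : (fun m => idxCLM β (Pi.single (c m) (Pi.single (t m) 1)))
          = fun m => (β (c m) (t m)) • (Pi.single (c m) 1 : Fin K → ℝ) :=
        funext fun m => idxCLM_single β (c m) (t m)
      rw [hvals, ContinuousMultilinearMap.map_smul_univ]
    simp only [hpt]
    rw [integral_smul_const, smul_eq_mul, pV_iFD V hV k]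
    have hsnoc : (Fin.snoc (fun m => (Pi.single (c m) 1 : Fin K → ℝ)) (Pi.single k 1)
          : Fin (M + 1) → (Fin K → ℝ))
        = fun i : Fin (M + 1) => Pi.single ((Fin.snoc c k : Fin (M+1) → Fin K) i) (1:ℝ) := by
      funext i
      refine Fin.lastCases ?_ (fun i' => ?_) i
      · rw [Fin.snoc_last, Fin.snoc_last]
      · rw [Fin.snoc_castSucc, Fin.snoc_castSucc]
    rw [hsnoc, moment]
  -- symmetry of mixed partials
  obtain ⟨σ, hσ⟩ := exists_comp_eq (Fin.snoc δ j) (Fin.snoc γ k) (fun i => (hcount i).symm)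
  have hVc : ContDiff ℝ ((M + 1 : ℕ) : WithTop ℕ∞) V := by exact_mod_cast hV
  have hsym : iteratedFDeriv ℝ (M + 1) V 0 (fun i : Fin (M + 1) => Pi.single ((Fin.snoc γ k : Fin (M+1) → Fin K) i) (1:ℝ))
      = iteratedFDeriv ℝ (M + 1) V 0
          (fun i : Fin (M + 1) => Pi.single ((Fin.snoc δ j : Fin (M+1) → Fin K) i) (1:ℝ)) := by
    have hcompσ : (fun i : Fin (M + 1) => Pi.single ((Fin.snoc γ k : Fin (M+1) → Fin K) i) (1:ℝ))
        = (fun i : Fin (M + 1) => Pi.single ((Fin.snoc δ j : Fin (M+1) → Fin K) i) (1:ℝ)) ∘ σ := by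
      funext i
      rw [Function.comp_apply, hσ i]
    rw [hcompσ, iFD_perm V hVc 0 σ _]
  have h1 := key k γ ξ
  have h2 := key j δ η
  rw [hsym] at h1
  set c0 := iteratedFDeriv ℝ (M + 1) V 0
    (fun i : Fin (M + 1) => Pi.single ((Fin.snoc δ j : Fin (M+1) → Fin K) i) (1:ℝ)) with hc0def
  constructor
  · rw [h1, h2]; ring
  · intro hmδ hdδ
    have hc0 : c0 ≠ 0 := by
      rw [h2] at hdδ
      exact fun h => hdδ (by rw [h, mul_zero])
    rw [h1, h2, mul_div_mul_right _ _ hc0]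
end

section
/- Let M ≥ 1. Let ν and ν' be probability measures on Ω all of whose M-th order absolute moments are finite, and let V, V' : (Fin K → ℝ) → ℝ be (M+1)-times continuously differentiable on a neighborhood of the origin. Assume: for every γ : Fin (M+1) → Fin K, ∂_γ V(0) ≠ 0 and ∂_γ V'(0) ≠ 0; for every γ : Fin M → Fin K there exists ξ with ξ m : Fin (d (γ m)) such that moment_ν(τ) ≠ 0 for the M-tuple τ m = ⟨γ m, ξ m⟩, and likewise for ν'; and for every M-tuple τ and every good k, ∂_{(γ_τ,k)} V(0) · moment_ν(τ) = ∂_{(γ_τ,k)} V'(0) · moment_{ν'}(τ). Then for all M-tuples τ and σ, moment_ν(τ) · moment_{ν'}(σ) = moment_{ν'}(τ) · moment_ν(σ); that is, even without any scale assumption, the ratio of any two M-th order moments (with nonzero denominator) is identified. (Lemma: identification of ratios of all M-th order moments.) -/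
open MeasureTheory Function

section Symmetry

variable {E F : Type*} [NormedAddCommGroup E] [NormedSpace ℝ E]
  [NormedAddCommGroup F] [NormedSpace ℝ F]

private lemma fin_swap_succ {n : ℕ} {a b : Fin (n + 1)} (ha : a ≠ 0) (hb : b ≠ 0) (i : Fin n) :
    Equiv.swap a b i.succ = (Equiv.swap (a.pred ha) (b.pred hb) i).succ := by
  rcases eq_or_ne i (a.pred ha) with rfl | hia
  · rw [Fin.succ_pred, Equiv.swap_apply_left, Equiv.swap_apply_left, Fin.succ_pred]
  rcases eq_or_ne i (b.pred hb) with rfl | hib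
  · rw [Fin.succ_pred, Equiv.swap_apply_right, Equiv.swap_apply_right, Fin.succ_pred]
  rw [Equiv.swap_apply_of_ne_of_ne hia hib,
    Equiv.swap_apply_of_ne_of_ne (fun h => hia (by simp [← h])) (fun h => hib (by simp [← h]))]

private theorem iteratedFDeriv_comp_swap :
    ∀ (n : ℕ) {f : E → F} {x : E}, ContDiffAt ℝ n f x →
      ∀ (a b : Fin n) (v : Fin n → E),
        iteratedFDeriv ℝ n f x (v ∘ Equiv.swap a b) = iteratedFDeriv ℝ n f x v := by
  intro n
  induction n with
  | zero => intro f x _ a _ _; exact a.elim0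
  | succ n IH =>
    have key : ∀ {f : E → F} {x : E}, ContDiffAt ℝ (n + 1 : ℕ) f x →
        ∀ (a b : Fin (n + 1)), a ≠ 0 → b ≠ 0 → ∀ v : Fin (n + 1) → E,
        iteratedFDeriv ℝ (n + 1) f x (v ∘ Equiv.swap a b)
          = iteratedFDeriv ℝ (n + 1) f x v := by
      intro f x hf a b ha hb v
      set a' := a.pred ha with ha'
      set b' := b.pred hb with hb'
      set e := ContinuousMultilinearMap.domDomCongrₗᵢ ℝ E F (Equiv.swap a' b') with he
      have hg : (⇑e ∘ iteratedFDeriv ℝ n f) =ᶠ[nhds x] iteratedFDeriv ℝ n f := by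
        obtain ⟨u, u_open, hxu, hu⟩ :=
          hf.contDiffOn' (m := (n + 1 : ℕ)) le_rfl (by simp)
        rw [Set.insert_eq_self.mpr (Set.mem_univ x), Set.univ_inter] at hu
        filter_upwards [u_open.mem_nhds hxu] with y hy
        have hfy : ContDiffAt ℝ n f y :=
          ((hu y hy).contDiffAt (u_open.mem_nhds hy)).of_le (by exact_mod_cast Nat.le_succ n)
        exact ContinuousMultilinearMap.ext fun w => IH hfy a' b' w
      have hfd : fderiv ℝ (iteratedFDeriv ℝ n f) x
          = (e.toLinearIsometry.toContinuousLinearMap).comp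
              (fderiv ℝ (iteratedFDeriv ℝ n f) x) := by
        conv_lhs => rw [← hg.fderiv_eq]
        exact e.comp_fderiv
      have h0 : (v ∘ Equiv.swap a b) 0 = v 0 := by
        simp [Equiv.swap_apply_of_ne_of_ne (Ne.symm ha) (Ne.symm hb)]
      have htail : Fin.tail (v ∘ Equiv.swap a b) = (Fin.tail v) ∘ Equiv.swap a' b' := by
        funext i
        simp [Fin.tail, Function.comp, fin_swap_succ ha hb]
        rfl
      rw [iteratedFDeriv_succ_apply_left, iteratedFDeriv_succ_apply_left, h0, htail]
      conv_rhs => rw [hfd]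
      rfl
    rcases n with _ | m
    · intro f x hf a b v
      have : a = b := by omega
      subst this
      simp
    · -- n = m + 1, total order m + 2
      have swap01 : ∀ {f : E → F} {x : E}, ContDiffAt ℝ (m + 1 + 1 : ℕ) f x →
          ∀ v : Fin (m + 1 + 1) → E,
          iteratedFDeriv ℝ (m + 1 + 1) f x (v ∘ Equiv.swap 0 1)
            = iteratedFDeriv ℝ (m + 1 + 1) f x v := by
        intro f x hf v
        have hg : ContDiffAt ℝ 2 (iteratedFDeriv ℝ m f) x :=
          hf.iteratedFDeriv_right (by exact_mod_cast (by omega : 2 + m ≤ m + 1 + 1))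
        have hsymm := hg.isSymmSndFDerivAt (by simp)
        have key2 : ∀ w : Fin (m + 1 + 1) → E,
            iteratedFDeriv ℝ (m + 1 + 1) f x w
              = fderiv ℝ (fderiv ℝ (iteratedFDeriv ℝ m f)) x (w 0) (w 1)
                  (fun i => w i.succ.succ) := by
          intro w
          have hstep := LinearIsometryEquiv.comp_fderiv (𝕜 := ℝ)
            ((continuousMultilinearCurryLeftEquiv ℝ (fun _ : Fin (m + 1) => E) F).symm)
            (f := fderiv ℝ (iteratedFDeriv ℝ m f)) (x := x)
          rw [iteratedFDeriv_succ_apply_left, iteratedFDeriv_succ_eq_comp_left, hstep]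
          rfl
        rw [key2, key2]
        have h0 : (v ∘ Equiv.swap 0 1) 0 = v 1 := by simp
        have h1 : (v ∘ Equiv.swap 0 1) 1 = v 0 := by simp
        have h2 : (fun i : Fin m => (v ∘ Equiv.swap 0 1) i.succ.succ)
            = fun i : Fin m => v i.succ.succ := by
          funext i
          have hne0 : (i.succ.succ : Fin (m + 1 + 1)) ≠ 0 := Fin.succ_ne_zero _
          have hne1 : (i.succ.succ : Fin (m + 1 + 1)) ≠ 1 := by
            rw [← Fin.succ_zero_eq_one]
            exact fun h => Fin.succ_ne_zero i (Fin.succ_injective _ h)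
          simp [Equiv.swap_apply_of_ne_of_ne hne0 hne1]
        rw [h0, h1, h2, hsymm (v 1) (v 0)]
      intro f x hf a b v
      have case0 : ∀ (b : Fin (m + 1 + 1)), b ≠ 0 → ∀ v : Fin (m + 1 + 1) → E,
          iteratedFDeriv ℝ (m + 1 + 1) f x (v ∘ Equiv.swap 0 b)
            = iteratedFDeriv ℝ (m + 1 + 1) f x v := by
        intro b hb v
        rcases eq_or_ne b 1 with rfl | hb1
        · exact swap01 hf v
        · have h1ne0 : (1 : Fin (m + 1 + 1)) ≠ 0 := by simp
          have hswap : Equiv.swap (0 : Fin (m + 1 + 1)) b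
              = Equiv.swap 1 b * Equiv.swap 0 1 * (Equiv.swap 1 b)⁻¹ := by
            have h0 : Equiv.swap (1 : Fin (m + 1 + 1)) b 0 = 0 :=
              Equiv.swap_apply_of_ne_of_ne (Ne.symm h1ne0) (Ne.symm hb)
            have h1 : Equiv.swap (1 : Fin (m + 1 + 1)) b 1 = b := Equiv.swap_apply_left _ _
            rw [← Equiv.swap_apply_apply, h0, h1]
          have hcomp : v ∘ Equiv.swap 0 b
              = (((v ∘ Equiv.swap 1 b) ∘ Equiv.swap 0 1) ∘ Equiv.swap 1 b) := by
            funext i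
            simp only [Function.comp_apply, hswap, Equiv.Perm.mul_apply,
              Equiv.swap_inv]
          rw [hcomp, key hf 1 b h1ne0 hb, swap01 hf, key hf 1 b h1ne0 hb]
      rcases eq_or_ne a b with rfl | hab
      · simp
      rcases eq_or_ne a 0 with rfl | ha
      · exact case0 b (Ne.symm hab) v
      rcases eq_or_ne b 0 with rfl | hb
      · rw [Equiv.swap_comm]; exact case0 a ha v
      exact key hf a b ha hb v

end Symmetry

private lemma dV_comp_swap {K : ℕ} {n : ℕ} {V : (Fin K → ℝ) → ℝ}
    (hV : ContDiffAt ℝ n V 0) (δ : Fin n → Fin K) (a b : Fin n) :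
    dV n V (δ ∘ Equiv.swap a b) = dV n V δ :=
  iteratedFDeriv_comp_swap n hV a b fun i => Pi.single (δ i) 1

/-- The candidate ratio of moments, expressed via derivatives. -/
private noncomputable def rho {K : ℕ} (k₀ : Fin K) (M : ℕ) (V V' : (Fin K → ℝ) → ℝ)
    (γ : Fin M → Fin K) : ℝ :=
  dV (M + 1) V (Fin.snoc γ k₀) / dV (M + 1) V' (Fin.snoc γ k₀)

private lemma snoc_update_eq_comp_swap {K M : ℕ} (γ : Fin M → Fin K) (m : Fin M) (b : Fin K) :
    (Fin.snoc (Function.update γ m b) (γ m) : Fin (M + 1) → Fin K)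
      = (Fin.snoc γ b : Fin (M + 1) → Fin K) ∘ Equiv.swap m.castSucc (Fin.last M) := by
  funext i
  induction i using Fin.lastCases with
  | last =>
    simp [Function.comp, Equiv.swap_apply_right, Fin.snoc_last, Fin.snoc_castSucc]
  | cast j =>
    rcases eq_or_ne j m with rfl | hjm
    · simp [Function.comp, Equiv.swap_apply_left, Fin.snoc_castSucc, Fin.snoc_last]
    · have h1 : (j.castSucc : Fin (M + 1)) ≠ m.castSucc := by
        simpa using (Fin.castSucc_injective M).ne hjm
      have h2 : (j.castSucc : Fin (M + 1)) ≠ Fin.last M := (Fin.castSucc_lt_last j).ne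
      simp [Function.comp, Equiv.swap_apply_of_ne_of_ne h1 h2, Fin.snoc_castSucc,
        Function.update_of_ne hjm]

/-- Lemma: identification of ratios of all `M`-th order moments, without a scale assumption. -/
theorem stmt10 {K : ℕ} (hK : 0 < K) {d : Fin K → ℕ} (hd : ∀ k, 0 < d k)
    (M : ℕ) (hM : 1 ≤ M)
    (ν ν' : Measure (Coeff K d)) [IsProbabilityMeasure ν] [IsProbabilityMeasure ν']
    (hνmom : ∀ τ : Fin M → Σ k : Fin K, Fin (d k),
      Integrable (fun β => ∏ m : Fin M, |β (τ m).1 (τ m).2|) ν)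
    (hν'mom : ∀ τ : Fin M → Σ k : Fin K, Fin (d k),
      Integrable (fun β => ∏ m : Fin M, |β (τ m).1 (τ m).2|) ν')
    (V V' : (Fin K → ℝ) → ℝ)
    (hV : ContDiffAt ℝ (M + 1) V 0) (hV' : ContDiffAt ℝ (M + 1) V' 0)
    (hVne : ∀ γ : Fin (M + 1) → Fin K, dV (M + 1) V γ ≠ 0)
    (hV'ne : ∀ γ : Fin (M + 1) → Fin K, dV (M + 1) V' γ ≠ 0)
    (hrel : ∀ γ : Fin M → Fin K, ∃ ξ : ∀ m, Fin (d (γ m)),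
      moment ν (fun m => ⟨γ m, ξ m⟩) ≠ 0)
    (hrel' : ∀ γ : Fin M → Fin K, ∃ ξ : ∀ m, Fin (d (γ m)),
      moment ν' (fun m => ⟨γ m, ξ m⟩) ≠ 0)
    (hobs : ∀ (τ : Fin M → Σ k : Fin K, Fin (d k)) (k : Fin K),
      dV (M + 1) V (Fin.snoc (fun m => (τ m).1) k) * moment ν τ
        = dV (M + 1) V' (Fin.snoc (fun m => (τ m).1) k) * moment ν' τ) :
    ∀ τ σ : Fin M → Σ k : Fin K, Fin (d k),
      moment ν τ * moment ν' σ = moment ν' τ * moment ν σ := by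
  classical
  have hVc : ContDiffAt ℝ ((M + 1 : ℕ) : WithTop ℕ∞) V 0 := by exact_mod_cast hV
  have hV'c : ContDiffAt ℝ ((M + 1 : ℕ) : WithTop ℕ∞) V' 0 := by exact_mod_cast hV'
  set k₀ : Fin K := ⟨0, hK⟩ with hk₀
  -- Step 1: ν' moments are a derivative-ratio multiple of ν moments.
  have hmain : ∀ τ : Fin M → Σ k : Fin K, Fin (d k),
      moment ν' τ = rho k₀ M V V' (fun m => (τ m).1) * moment ν τ := by
    intro τ
    have h := hobs τ k₀
    have hne := hV'ne (Fin.snoc (fun m => (τ m).1) k₀)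
    rw [rho, div_mul_eq_mul_div, eq_div_iff hne]
    linear_combination -h
  -- Step 2: the derivative ratio is independent of the appended good `k`.
  have hkind : ∀ (γ : Fin M → Fin K) (k : Fin K),
      dV (M + 1) V (Fin.snoc γ k) / dV (M + 1) V' (Fin.snoc γ k) = rho k₀ M V V' γ := by
    intro γ k
    obtain ⟨ξ, hξ⟩ := hrel γ
    have h1 := hobs (fun m => ⟨γ m, ξ m⟩) k
    have h2 := hmain (fun m => ⟨γ m, ξ m⟩)
    have hγ : (fun m => ((fun m => (⟨γ m, ξ m⟩ : Σ k : Fin K, Fin (d k))) m).1) = γ := rfl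
    rw [hγ] at h1 h2
    rw [h2] at h1
    have hne := hV'ne (Fin.snoc γ k)
    have h3 : dV (M + 1) V (Fin.snoc γ k)
        = dV (M + 1) V' (Fin.snoc γ k) * rho k₀ M V V' γ := by
      apply mul_right_cancel₀ hξ
      linear_combination h1
    rw [h3, mul_div_cancel_left₀ _ hne]
  -- Step 3: `rho` is invariant under updating one coordinate.
  have hupd : ∀ (γ : Fin M → Fin K) (m : Fin M) (b : Fin K),
      rho k₀ M V V' (Function.update γ m b) = rho k₀ M V V' γ := by
    intro γ m b
    rw [← hkind (Function.update γ m b) (γ m), snoc_update_eq_comp_swap γ m b,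
      dV_comp_swap hVc, dV_comp_swap hV'c, hkind γ b]
  -- Step 4: `rho` is constant.
  have haux : ∀ n : ℕ, ∀ γ γ' : Fin M → Fin K,
      (∀ m : Fin M, n ≤ (m : ℕ) → γ m = γ' m) → rho k₀ M V V' γ = rho k₀ M V V' γ' := by
    intro n
    induction n with
    | zero =>
      intro γ γ' h
      have : γ = γ' := funext fun m => h m (Nat.zero_le _)
      rw [this]
    | succ n ih =>
      intro γ γ' h
      by_cases hn : n < M
      · rw [← hupd γ ⟨n, hn⟩ (γ' ⟨n, hn⟩)]
        apply ih
        intro m' hm'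
        rcases eq_or_ne m' ⟨n, hn⟩ with rfl | hne
        · simp
        · rw [Function.update_of_ne hne]
          apply h
          have : (m' : ℕ) ≠ n := fun hc => hne (Fin.ext hc)
          omega
      · apply ih
        intro m' hm'
        exact absurd m'.isLt (by omega)
  intro τ σ
  have hρc := haux M (fun m => (τ m).1) (fun m => (σ m).1)
    (fun m hm => absurd m.isLt (by omega))
  rw [hmain τ, hmain σ, hρc]
  ring
end

section
/- Let K = 2 with one characteristic per good, let ν be a compactly supported probability measure on ℝ², and let V : (Fin 2 → ℝ) → ℝ be three times continuously differentiable on all of (Fin 2 → ℝ). Define Ȳ_k(x₁, x₂) := ∫ ∂_k V (β₁ x₁, β₂ x₂) dν(β) for k = 1, 2. If ∂_{x₂} ∂_{x₁} Ȳ₁(0,0) ≠ 0 and ∂_{x₁} ∂_{x₂} Ȳ₂(0,0) ≠ 0, then (∂_{x₁} ∂_{x₁} Ȳ₂(0,0) / ∂_{x₂} ∂_{x₁} Ȳ₁(0,0)) · (∂_{x₂} ∂_{x₂} Ȳ₁(0,0) / ∂_{x₁} ∂_{x₂} Ȳ₂(0,0)) ≥ 1. (Testable implication: a Cauchy–Schwarz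 inequality among second-order derivatives of the average structural function at zero covariates.) -/
open MeasureTheory

set_option maxSynthPendingDepth 3
set_option maxHeartbeats 1000000

open scoped Topology

noncomputable section StmtAux

abbrev EE := Fin 2 → ℝ

def LbL : EE →ₗ[ℝ] (EE →L[ℝ] EE) where
  toFun β := ContinuousLinearMap.pi fun i => β i • ContinuousLinearMap.proj i
  map_add' β γ := by ext x i; simp [add_mul]
  map_smul' c β := by ext x i; simp [mul_assoc]

def Lb (β : EE) : EE →L[ℝ] EE := LbL β

lemma Lb_apply (β x : EE) : Lb β x = fun i => β i * x i := by
  ext i; simp [Lb, LbL]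

lemma Lb_cont : Continuous Lb := LbL.continuous_of_finiteDimensional

lemma norm_Lb_apply_le (β x : EE) : ‖Lb β x‖ ≤ ‖β‖ * ‖x‖ := by
  rw [Lb_apply]
  refine (pi_norm_le_iff_of_nonneg (by positivity)).2 fun i => ?_
  rw [Real.norm_eq_abs, abs_mul]
  exact mul_le_mul (norm_le_pi_norm β i) (norm_le_pi_norm x i) (abs_nonneg _) (norm_nonneg _)

lemma Lb_single (β : EE) (i : Fin 2) : Lb β (Pi.single i 1) = β i • (Pi.single i 1 : EE) := by
  ext j
  rw [Lb_apply]
  by_cases h : j = i <;> simp [h, Pi.single_apply]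


def evk (k : Fin 2) : (EE →L[ℝ] ℝ) →L[ℝ] ℝ :=
  ContinuousLinearMap.apply ℝ ℝ (Pi.single k 1)

def Psi (k : Fin 2) (β : EE) : (EE →L[ℝ] (EE →L[ℝ] ℝ)) →L[ℝ] (EE →L[ℝ] ℝ) :=
  ((ContinuousLinearMap.compL ℝ EE (EE →L[ℝ] ℝ) ℝ) (evk k)).comp
    (((ContinuousLinearMap.compL ℝ EE EE (EE →L[ℝ] ℝ)).flip) (Lb β))

lemma Psi_apply (k : Fin 2) (β : EE) (A : EE →L[ℝ] (EE →L[ℝ] ℝ)) :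
    Psi k β A = (evk k).comp (A.comp (Lb β)) := rfl

def F1 (V : EE → ℝ) (k : Fin 2) (β x : EE) : EE →L[ℝ] ℝ :=
  (evk k).comp (((fderiv ℝ (fderiv ℝ V)) (Lb β x)).comp (Lb β))

def F2 (V : EE → ℝ) (k : Fin 2) (β x : EE) : EE →L[ℝ] (EE →L[ℝ] ℝ) :=
  (Psi k β).comp (((fderiv ℝ (fderiv ℝ (fderiv ℝ V))) (Lb β x)).comp (Lb β))

lemma F1_apply (V : EE → ℝ) (k : Fin 2) (β x u : EE) :
    F1 V k β x u = fderiv ℝ (fderiv ℝ V) (Lb β x) (Lb β u) (Pi.single k 1) := by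
  simp [F1, evk, ContinuousLinearMap.apply_apply]

lemma F2_apply (V : EE → ℝ) (k : Fin 2) (β x u v : EE) :
    F2 V k β x u v
      = fderiv ℝ (fderiv ℝ (fderiv ℝ V)) (Lb β x) (Lb β u) (Lb β v) (Pi.single k 1) := by
  simp [F2, Psi, evk, ContinuousLinearMap.apply_apply]

lemma hasF1 (V : EE → ℝ) (hV : ContDiff ℝ 3 V) (k : Fin 2) (β x : EE) :
    HasFDerivAt (fun y => fderiv ℝ V (Lb β y) (Pi.single k 1)) (F1 V k β x) x := by
  have hW : ContDiff ℝ 2 (fderiv ℝ V) := hV.fderiv_right (by norm_num)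
  have h0 : HasFDerivAt (fun y => fderiv ℝ V (Lb β y))
      ((fderiv ℝ (fderiv ℝ V) (Lb β x)).comp (Lb β)) x :=
    ((hW.differentiable (by norm_num) (Lb β x)).hasFDerivAt).comp x (Lb β).hasFDerivAt
  have := ((evk k).hasFDerivAt (x := fderiv ℝ V (Lb β x))).comp x h0
  simpa [Function.comp_def, evk, ContinuousLinearMap.apply_apply, F1] using this

lemma hasF2 (V : EE → ℝ) (hV : ContDiff ℝ 3 V) (k : Fin 2) (β x : EE) :
    HasFDerivAt (fun y => F1 V k β y) (F2 V k β x) x := by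
  have hW2 : ContDiff ℝ 1 (fderiv ℝ (fderiv ℝ V)) :=
    (hV.fderiv_right (m := 2) (by norm_num)).fderiv_right (by norm_num)
  have h0 : HasFDerivAt (fun y => fderiv ℝ (fderiv ℝ V) (Lb β y))
      ((fderiv ℝ (fderiv ℝ (fderiv ℝ V)) (Lb β x)).comp (Lb β)) x :=
    ((hW2.differentiable (by norm_num) (Lb β x)).hasFDerivAt).comp x (Lb β).hasFDerivAt
  have := ((Psi k β).hasFDerivAt (x := fderiv ℝ (fderiv ℝ V) (Lb β x))).comp x h0
  simpa [Function.comp_def, F1, F2, Psi_apply] using this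

lemma integ_aux {G : Type} [NormedAddCommGroup G]
    {ν : Measure EE} [IsFiniteMeasure ν] {R : ℝ}
    (hae : ∀ᵐ β ∂ν, ‖β‖ ≤ R)
    {f : EE → G} (hf : Continuous f) : Integrable f ν := by
  obtain ⟨c, hc⟩ :=
    (isCompact_closedBall (0 : EE) R).exists_bound_of_continuousOn hf.continuousOn
  exact (integrable_const c).mono' hf.aestronglyMeasurable
    (hae.mono fun β hβ => hc β (by simpa [Metric.mem_closedBall, dist_zero_right] using hβ))


lemma F1_norm_le (V : EE → ℝ) (k : Fin 2) (β x : EE) :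
    ‖F1 V k β x‖ ≤ ‖fderiv ℝ (fderiv ℝ V) (Lb β x)‖ * ‖β‖ := by
  refine ContinuousLinearMap.opNorm_le_bound _ (by positivity) fun u => ?_
  rw [F1_apply]
  calc ‖fderiv ℝ (fderiv ℝ V) (Lb β x) (Lb β u) (Pi.single k 1)‖
      ≤ ‖fderiv ℝ (fderiv ℝ V) (Lb β x)‖ * ‖Lb β u‖ * ‖(Pi.single k 1 : EE)‖ :=
        ContinuousLinearMap.le_opNorm₂ _ _ _
    _ = ‖fderiv ℝ (fderiv ℝ V) (Lb β x)‖ * ‖Lb β u‖ := by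
        rw [Pi.norm_single]; simp
    _ ≤ ‖fderiv ℝ (fderiv ℝ V) (Lb β x)‖ * (‖β‖ * ‖u‖) := by
        gcongr; exact norm_Lb_apply_le β u
    _ = ‖fderiv ℝ (fderiv ℝ V) (Lb β x)‖ * ‖β‖ * ‖u‖ := by ring

lemma F2_norm_le (V : EE → ℝ) (k : Fin 2) (β x : EE) :
    ‖F2 V k β x‖ ≤ ‖fderiv ℝ (fderiv ℝ (fderiv ℝ V)) (Lb β x)‖ * (‖β‖ * ‖β‖) := by
  refine ContinuousLinearMap.opNorm_le_bound _ (by positivity) fun u => ?_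
  refine ContinuousLinearMap.opNorm_le_bound _ (by positivity) fun v => ?_
  rw [F2_apply]
  calc ‖fderiv ℝ (fderiv ℝ (fderiv ℝ V)) (Lb β x) (Lb β u) (Lb β v) (Pi.single k 1)‖
      ≤ ‖fderiv ℝ (fderiv ℝ (fderiv ℝ V)) (Lb β x) (Lb β u)‖ * ‖Lb β v‖
          * ‖(Pi.single k 1 : EE)‖ := ContinuousLinearMap.le_opNorm₂ _ _ _
    _ = ‖fderiv ℝ (fderiv ℝ (fderiv ℝ V)) (Lb β x) (Lb β u)‖ * ‖Lb β v‖ := by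
        rw [Pi.norm_single]; simp
    _ ≤ (‖fderiv ℝ (fderiv ℝ (fderiv ℝ V)) (Lb β x)‖ * ‖Lb β u‖) * ‖Lb β v‖ := by
        gcongr; exact ContinuousLinearMap.le_opNorm _ _
    _ ≤ (‖fderiv ℝ (fderiv ℝ (fderiv ℝ V)) (Lb β x)‖ * (‖β‖ * ‖u‖)) * (‖β‖ * ‖v‖) := by
        gcongr <;> [exact norm_Lb_apply_le β u; exact norm_Lb_apply_le β v]
    _ = ‖fderiv ℝ (fderiv ℝ (fderiv ℝ V)) (Lb β x)‖ * (‖β‖ * ‖β‖) * ‖u‖ * ‖v‖ := by ring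

lemma cont_Lbx (x : EE) : Continuous fun β => Lb β x :=
  Lb_cont.clm_apply continuous_const

lemma F1_cont (V : EE → ℝ) (hV : ContDiff ℝ 3 V) (k : Fin 2) (x : EE) :
    Continuous fun β => F1 V k β x := by
  have hW2c : Continuous (fderiv ℝ (fderiv ℝ V)) :=
    ((hV.fderiv_right (m := 2) (by norm_num)).fderiv_right (m := 1) (by norm_num)).continuous
  exact continuous_const.clm_comp ((hW2c.comp (cont_Lbx x)).clm_comp Lb_cont)

lemma F2_cont (V : EE → ℝ) (hV : ContDiff ℝ 3 V) (k : Fin 2) (x : EE) :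
    Continuous fun β => F2 V k β x := by
  have hW3c : Continuous (fderiv ℝ (fderiv ℝ (fderiv ℝ V))) :=
    (((hV.fderiv_right (m := 2) (by norm_num)).fderiv_right (m := 1)
        (by norm_num)).fderiv_right (m := 0) (by norm_num)).continuous
  have hPsic : Continuous fun β => Psi k β :=
    continuous_const.clm_comp
      ((((ContinuousLinearMap.compL ℝ EE EE (EE →L[ℝ] ℝ)).flip).continuous).comp Lb_cont)
  exact hPsic.clm_comp ((hW3c.comp (cont_Lbx x)).clm_comp Lb_cont)

lemma integrand_cont (V : EE → ℝ) (hV : ContDiff ℝ 3 V) (k : Fin 2) (x : EE) :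
    Continuous fun β => fderiv ℝ V (Lb β x) (Pi.single k 1) := by
  have hWc : Continuous (fderiv ℝ V) := (hV.fderiv_right (m := 2) (by norm_num)).continuous
  exact (hWc.comp (cont_Lbx x)).clm_apply continuous_const


lemma W3_symm (V : EE → ℝ) (hV : ContDiff ℝ 3 V) (u v w : EE) :
    fderiv ℝ (fderiv ℝ (fderiv ℝ V)) 0 u v w
      = fderiv ℝ (fderiv ℝ (fderiv ℝ V)) 0 u w v := by
  have hW2 : ContDiff ℝ 1 (fderiv ℝ (fderiv ℝ V)) :=
    (hV.fderiv_right (m := 2) (by norm_num)).fderiv_right (by norm_num)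
  set e := (ContinuousLinearMap.flipₗᵢ ℝ EE EE ℝ).toContinuousLinearEquiv with he
  have hWsym : (fderiv ℝ (fderiv ℝ V)) = fun y => e (fderiv ℝ (fderiv ℝ V) y) := by
    funext y
    ext a b
    have h := (hV.contDiffAt (x := y)).isSymmSndFDerivAt (by norm_num)
    exact h a b
  have hd : HasFDerivAt (fun y => e (fderiv ℝ (fderiv ℝ V) y))
      ((e : (EE →L[ℝ] (EE →L[ℝ] ℝ)) →L[ℝ] (EE →L[ℝ] (EE →L[ℝ] ℝ))).comp
        (fderiv ℝ (fderiv ℝ (fderiv ℝ V)) 0)) 0 :=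
    (e.hasFDerivAt).comp 0 ((hW2.differentiable (by norm_num) 0).hasFDerivAt)
  rw [← hWsym] at hd
  have h3 := hd.fderiv
  conv_lhs => rw [h3]
  rfl

end StmtAux

/-- Second-order mixed partial derivative at the origin of a function on `ℝ²`,
in coordinate directions `i` then `j`. -/
noncomputable def D2 (f : (Fin 2 → ℝ) → ℝ) (i j : Fin 2) : ℝ :=
  iteratedFDeriv ℝ 2 f 0 ![Pi.single i 1, Pi.single j 1]

/-- Testable implication: a Cauchy–Schwarz inequality among second-order derivatives of the
average structural function at zero covariates. -/
theorem stmt12 (ν : Measure (Fin 2 → ℝ)) [IsProbabilityMeasure ν]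
    (hνc : ∃ C : Set (Fin 2 → ℝ), IsCompact C ∧ ν Cᶜ = 0)
    (V : (Fin 2 → ℝ) → ℝ) (hV : ContDiff ℝ 3 V)
    (Ybar : Fin 2 → (Fin 2 → ℝ) → ℝ)
    (hYbar : ∀ k x, Ybar k x = ∫ β, fderiv ℝ V (fun i => β i * x i) (Pi.single k 1) ∂ν)
    (h1 : D2 (Ybar 0) 0 1 ≠ 0)  -- ∂_{x₂} ∂_{x₁} Ȳ₁(0,0) ≠ 0
    (h2 : D2 (Ybar 1) 1 0 ≠ 0)  -- ∂_{x₁} ∂_{x₂} Ȳ₂(0,0) ≠ 0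
    : (D2 (Ybar 1) 0 0 / D2 (Ybar 0) 0 1) * (D2 (Ybar 0) 1 1 / D2 (Ybar 1) 1 0) ≥ 1 := by
  classical
  obtain ⟨C, hC, hCν⟩ := hνc
  obtain ⟨R₀, hR₀⟩ := hC.isBounded.subset_closedBall 0
  set R := max R₀ 0 with hRdef
  have hR0 : (0:ℝ) ≤ R := le_max_right _ _
  have hae : ∀ᵐ β ∂ν, ‖β‖ ≤ R := by
    have hmem : ∀ᵐ β ∂ν, β ∈ C := by
      rw [MeasureTheory.ae_iff]
      exact hCν
    filter_upwards [hmem] with β hβ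
    exact le_trans (by simpa [Metric.mem_closedBall, dist_zero_right] using hR₀ hβ)
      (le_max_left _ _)
  obtain ⟨M2, hM2⟩ := (isCompact_closedBall (0 : EE) (2*R)).exists_bound_of_continuousOn
    (((hV.fderiv_right (m := 2) (by norm_num)).fderiv_right (m := 1)
      (by norm_num)).continuous.continuousOn)
  obtain ⟨M3, hM3⟩ := (isCompact_closedBall (0 : EE) (2*R)).exists_bound_of_continuousOn
    ((((hV.fderiv_right (m := 2) (by norm_num)).fderiv_right (m := 1)
      (by norm_num)).fderiv_right (m := 0) (by norm_num)).continuous.continuousOn)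
  have h0mem : (0:EE) ∈ Metric.closedBall (0:EE) (2*R) := by
    simp only [Metric.mem_closedBall, dist_self]
    positivity
  have hM2nonneg : 0 ≤ M2 := le_trans (norm_nonneg _) (hM2 0 h0mem)
  have hM3nonneg : 0 ≤ M3 := le_trans (norm_nonneg _) (hM3 0 h0mem)
  have hball : ∀ (β x : EE), ‖β‖ ≤ R → ‖x‖ < 2 →
      Lb β x ∈ Metric.closedBall (0:EE) (2*R) := by
    intro β x hβ hx
    rw [Metric.mem_closedBall, dist_zero_right]
    calc ‖Lb β x‖ ≤ ‖β‖ * ‖x‖ := norm_Lb_apply_le β x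
      _ ≤ R * 2 := mul_le_mul hβ (le_of_lt hx) (norm_nonneg _) hR0
      _ = 2 * R := by ring
  have key1 : ∀ k : Fin 2, ∀ x₀ : EE, ‖x₀‖ < 1 →
      HasFDerivAt (Ybar k) (∫ β, F1 V k β x₀ ∂ν) x₀ := by
    intro k x₀ hx₀
    have hfun : Ybar k = fun x => ∫ β, fderiv ℝ V (Lb β x) (Pi.single k 1) ∂ν := by
      funext x
      rw [hYbar]
      simp only [Lb_apply]
    rw [hfun]
    apply hasFDerivAt_integral_of_dominated_of_fderiv_le
      (F := fun x β => fderiv ℝ V (Lb β x) (Pi.single k 1))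
      (F' := fun x β => F1 V k β x) (bound := fun _ => M2 * R) (s := Metric.ball x₀ 1) (Metric.ball_mem_nhds x₀ one_pos)
    · exact Filter.Eventually.of_forall fun x =>
        (integrand_cont V hV k x).aestronglyMeasurable
    · exact integ_aux hae (integrand_cont V hV k x₀)
    · exact (F1_cont V hV k x₀).aestronglyMeasurable
    · filter_upwards [hae] with β hβ
      intro x hx
      have hx1 : ‖x - x₀‖ < 1 := mem_ball_iff_norm.1 hx
      have hx2 : ‖x‖ < 2 := by
        have h := norm_add_le (x - x₀) x₀
        rw [sub_add_cancel] at h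
        linarith
      calc ‖F1 V k β x‖ ≤ ‖fderiv ℝ (fderiv ℝ V) (Lb β x)‖ * ‖β‖ := F1_norm_le V k β x
        _ ≤ M2 * R := mul_le_mul (hM2 _ (hball β x hβ hx2)) hβ (norm_nonneg _) hM2nonneg
    · exact integrable_const _
    · exact Filter.Eventually.of_forall fun β x _ => hasF1 V hV k β x
  have key2 : ∀ k : Fin 2,
      HasFDerivAt (fun x => ∫ β, F1 V k β x ∂ν) (∫ β, F2 V k β 0 ∂ν) 0 := by
    intro k
    apply hasFDerivAt_integral_of_dominated_of_fderiv_le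
      (F := fun x β => F1 V k β x)
      (F' := fun x β => F2 V k β x) (bound := fun _ => M3 * (R*R)) (s := Metric.ball (0:EE) 1) (Metric.ball_mem_nhds (0:EE) one_pos)
    · exact Filter.Eventually.of_forall fun x => (F1_cont V hV k x).aestronglyMeasurable
    · exact integ_aux hae (F1_cont V hV k 0)
    · exact (F2_cont V hV k 0).aestronglyMeasurable
    · filter_upwards [hae] with β hβ
      intro x hx
      have hx2 : ‖x‖ < 2 := by
        have := mem_ball_iff_norm.1 hx
        rw [sub_zero] at this
        linarith
      calc ‖F2 V k β x‖ ≤ ‖fderiv ℝ (fderiv ℝ (fderiv ℝ V)) (Lb β x)‖ * (‖β‖ * ‖β‖) :=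
            F2_norm_le V k β x
        _ ≤ M3 * (R*R) := mul_le_mul (hM3 _ (hball β x hβ hx2))
            (mul_le_mul hβ hβ (norm_nonneg _) hR0) (by positivity) hM3nonneg
    · exact integrable_const _
    · exact Filter.Eventually.of_forall fun β x _ => hasF2 V hV k β x
  have hfd1 : ∀ k, fderiv ℝ (fderiv ℝ (Ybar k)) 0 = ∫ β, F2 V k β 0 ∂ν := by
    intro k
    have hev : fderiv ℝ (Ybar k) =ᶠ[𝓝 (0:EE)] fun x => ∫ β, F1 V k β x ∂ν := by
      filter_upwards [Metric.ball_mem_nhds (0:EE) one_pos] with x hx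
      exact (key1 k x (by simpa [Metric.mem_ball, dist_zero_right] using hx)).fderiv
    rw [hev.fderiv_eq, (key2 k).fderiv]
  have hD2 : ∀ k i j : Fin 2, D2 (Ybar k) i j
      = (∫ β, β i * β j ∂ν) * (fderiv ℝ (fderiv ℝ (fderiv ℝ V)) 0
          (Pi.single i 1) (Pi.single j 1) (Pi.single k 1)) := by
    intro k i j
    have hint2 : Integrable (fun β => F2 V k β 0) ν := integ_aux hae (F2_cont V hV k 0)
    have hint2i : Integrable (fun β => F2 V k β 0 (Pi.single i 1)) ν :=
      integ_aux hae ((F2_cont V hV k 0).clm_apply continuous_const)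
    rw [D2, iteratedFDeriv_two_apply]
    simp only [Matrix.cons_val_zero, Matrix.cons_val_one, Matrix.head_cons]
    rw [hfd1 k, ContinuousLinearMap.integral_apply hint2,
        ContinuousLinearMap.integral_apply hint2i]
    have hpt : ∀ β : EE, F2 V k β 0 (Pi.single i 1) (Pi.single j 1)
        = (β i * β j) * fderiv ℝ (fderiv ℝ (fderiv ℝ V)) 0
            (Pi.single i 1) (Pi.single j 1) (Pi.single k 1) := by
      intro β
      rw [F2_apply, (Lb β).map_zero, Lb_single, Lb_single]
      rw [ContinuousLinearMap.map_smul, ContinuousLinearMap.smul_apply,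
        ContinuousLinearMap.map_smul, ContinuousLinearMap.smul_apply,
        ContinuousLinearMap.smul_apply, smul_eq_mul, smul_eq_mul]
      ring
    simp_rw [hpt]
    rw [integral_mul_const]
  have haA : D2 (Ybar 1) 0 0 = (∫ β, β 0 * β 0 ∂ν) *
      (fderiv ℝ (fderiv ℝ (fderiv ℝ V)) 0 (Pi.single 0 1) (Pi.single 1 1) (Pi.single 0 1)) := by
    rw [hD2 1 0 0, W3_symm V hV]
  have hcA : D2 (Ybar 0) 0 1 = (∫ β, β 0 * β 1 ∂ν) *
      (fderiv ℝ (fderiv ℝ (fderiv ℝ V)) 0 (Pi.single 0 1) (Pi.single 1 1) (Pi.single 0 1)) :=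
    hD2 0 0 1
  have hbB : D2 (Ybar 0) 1 1 = (∫ β, β 1 * β 1 ∂ν) *
      (fderiv ℝ (fderiv ℝ (fderiv ℝ V)) 0 (Pi.single 1 1) (Pi.single 0 1) (Pi.single 1 1)) := by
    rw [hD2 0 1 1, W3_symm V hV]
  have hcB : D2 (Ybar 1) 1 0 = (∫ β, β 0 * β 1 ∂ν) *
      (fderiv ℝ (fderiv ℝ (fderiv ℝ V)) 0 (Pi.single 1 1) (Pi.single 0 1) (Pi.single 1 1)) := by
    rw [hD2 1 1 0]
    congr 1
    exact integral_congr_ae (Filter.Eventually.of_forall fun β => mul_comm _ _)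
  rw [hcA] at h1
  rw [hcB] at h2
  rw [haA, hcA, hbB, hcB]
  set a := ∫ β, β 0 * β 0 ∂ν with ha
  set b := ∫ β, β 1 * β 1 ∂ν with hb
  set c := ∫ β, β 0 * β 1 ∂ν with hcdef
  set A := fderiv ℝ (fderiv ℝ (fderiv ℝ V)) 0 (Pi.single 0 1) (Pi.single 1 1) (Pi.single 0 1)
    with hAdef
  set B := fderiv ℝ (fderiv ℝ (fderiv ℝ V)) 0 (Pi.single 1 1) (Pi.single 0 1) (Pi.single 1 1)
    with hBdef
  have hc : c ≠ 0 := left_ne_zero_of_mul h1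
  have hA : A ≠ 0 := right_ne_zero_of_mul h1
  have hB : B ≠ 0 := right_ne_zero_of_mul h2
  have hIa : Integrable (fun β : EE => β 0 * β 0) ν :=
    integ_aux hae ((continuous_apply _).mul (continuous_apply _))
  have hIb : Integrable (fun β : EE => β 1 * β 1) ν :=
    integ_aux hae ((continuous_apply _).mul (continuous_apply _))
  have hIc : Integrable (fun β : EE => β 0 * β 1) ν :=
    integ_aux hae ((continuous_apply _).mul (continuous_apply _))
  have ha0 : 0 ≤ a := integral_nonneg fun β => mul_self_nonneg _
  have hcs : c * c ≤ a * b := by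
    rcases eq_or_lt_of_le ha0 with hz | hap
    · exfalso
      have hz' : ∫ β, β 0 * β 0 ∂ν = 0 := by rw [← ha]; exact hz.symm
      have h00 : (fun β : EE => β 0 * β 0) =ᵐ[ν] 0 :=
        (integral_eq_zero_iff_of_nonneg (f := fun β : EE => β 0 * β 0)
          (fun β => mul_self_nonneg (β 0)) hIa).1 hz'
      have h0 : ∀ᵐ β ∂ν, β 0 = (0:ℝ) := by
        filter_upwards [h00] with β hβ
        exact mul_self_eq_zero.1 hβ
      apply hc
      have hzz : (fun β : EE => β 0 * β 1) =ᵐ[ν] 0 := by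
        filter_upwards [h0] with β hβ
        simp [hβ]
      rw [hcdef, integral_congr_ae hzz]
      simp
    · have hq : 0 ≤ ∫ β, (β 1 - (c/a) * β 0)^2 ∂ν := integral_nonneg fun β => sq_nonneg _
      have hexp : ∫ β, (β 1 - (c/a) * β 0)^2 ∂ν
          = b - (2*(c/a)) * c + (c/a)^2 * a := by
        have hfe : (fun β : EE => (β 1 - (c/a) * β 0)^2)
            = fun β => (β 1 * β 1 - (2*(c/a)) * (β 0 * β 1)) + (c/a)^2 * (β 0 * β 0) :=
          funext fun β => by ring
        have hm1 : Integrable (fun β : EE => 2*(c/a)*(β 0 * β 1)) ν := hIc.const_mul _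
        have hm2 : Integrable (fun β : EE => (c/a)^2*(β 0 * β 0)) ν := hIa.const_mul _
        have hsub : Integrable (fun β : EE => β 1 * β 1 - 2*(c/a)*(β 0 * β 1)) ν :=
          hIb.sub hm1
        rw [hfe, integral_add hsub hm2, integral_sub hIb hm1, integral_const_mul,
          integral_const_mul, ← ha, ← hb, ← hcdef]
      rw [hexp] at hq
      have hane : a ≠ 0 := ne_of_gt hap
      have h5 : (2*(c/a)) * c = 2 * (c*c) / a := by ring
      have h6 : (c/a)^2 * a = (c*c)/a := by field_simp
      rw [h5, h6] at hq
      rw [show 2*(c*c)/a = 2*(c*c/a) from by ring] at hq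
      have h8 : c*c/a ≤ b := by linarith
      have h7 : c*c ≤ b * a := by
        calc c*c = (c*c/a) * a := by field_simp
          _ ≤ b * a := mul_le_mul_of_nonneg_right h8 (le_of_lt hap)
      linarith [h7, mul_comm b a]
  have hfrac : a * A / (c * A) * (b * B / (c * B)) = (a*b)/(c*c) := by
    field_simp
  rw [ge_iff_le, hfrac, one_le_div (mul_self_pos.2 hc)]
  exact hcs
end

section
/- Let ν be a compactly supported probability measure on (Fin K → ℝ) with typical point ρ, and let V : (Fin K → ℝ) → ℝ be twice continuously differentiable on all of (Fin K → ℝ). For x ∈ (Fin K → ℝ) with all coordinates positive, define f_k(x) := ∫ ∂_k V (fun i ↦ (x i) ^ (ρ i)) dν(ρ), where (x i) ^ (ρ i) is the real power (rpow). Then for all goods j and k, ∂_{x_j} f_k(𝟙) · ∫ ρ k dν(ρ) = ∂_{x_k} f_j(𝟙) · ∫ ρ j dν(ρ), where 𝟙 is the all-ones vector; in particular, if ∂_{x_k} f_j(𝟙) ≠ 0 and ∫ ρ k dν ≠ 0, then ∂_{x_j} f_k(𝟙) / ∂_{x_k} f_j(𝟙) = (∫ ρ j dν) / (∫ ρ k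 dν). (Remark on nonlinear random coefficients: ratios of cross-derivatives of the average structural function at the vector of ones identify ratios of mean random exponents.) -/
set_option maxHeartbeats 1000000

open MeasureTheory Metric ContinuousLinearMap

private theorem phi_deriv13 {K : ℕ} (ρ x : Fin K → ℝ) (hx : ∀ i, 0 < x i) :
    HasFDerivAt (fun y : Fin K → ℝ => fun i => y i ^ ρ i)
      (ContinuousLinearMap.mul ℝ (Fin K → ℝ) (fun i => ρ i * x i ^ (ρ i - 1))) x := by
  apply hasFDerivAt_pi''
  intro i
  have h := (Real.hasDerivAt_rpow_const (x := x i) (p := ρ i) (Or.inl (hx i).ne')).comp_hasFDerivAt x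
    ((ContinuousLinearMap.proj i (R := ℝ) (φ := fun _ : Fin K => ℝ)).hasFDerivAt)
  have he : (ContinuousLinearMap.proj (R := ℝ) (φ := fun _ : Fin K => ℝ) i).comp
      (ContinuousLinearMap.mul ℝ (Fin K → ℝ) (fun i => ρ i * x i ^ (ρ i - 1)))
      = (ρ i * x i ^ (ρ i - 1)) • ContinuousLinearMap.proj i := by
    ext v; simp [mul_comm]
  rw [he]; exact h

private theorem aux13 {K : ℕ}
    (ν : Measure (Fin K → ℝ)) [IsProbabilityMeasure ν]
    (C : Set (Fin K → ℝ)) (hC : IsCompact C) (hCnull : ν Cᶜ = 0)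
    (V : (Fin K → ℝ) → ℝ) (hV : ContDiff ℝ 2 V)
    (f : Fin K → (Fin K → ℝ) → ℝ)
    (hf : ∀ (k : Fin K) (x : Fin K → ℝ), (∀ i, 0 < x i) →
      f k x = ∫ ρ, fderiv ℝ V (fun i => x i ^ ρ i) (Pi.single k 1) ∂ν)
    (j k : Fin K) :
    fderiv ℝ (f k) 1 (Pi.single j 1)
      = fderiv ℝ (fderiv ℝ V) 1 (Pi.single j 1) (Pi.single k 1) * ∫ ρ, ρ j ∂ν := by
  set B := fderiv ℝ (fderiv ℝ V) with hB
  have hC1 : ContDiff ℝ 1 (fderiv ℝ V) := hV.fderiv_right (by norm_num)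
  have hBcont : Continuous B := hC1.continuous_fderiv one_ne_zero
  -- positivity on the ball
  have hball : ∀ x ∈ ball (1 : Fin K → ℝ) (1/2), ∀ i, 1/2 < x i ∧ x i < 3/2 := by
    intro x hx i
    have h := dist_le_pi_dist x 1 i
    rw [mem_ball] at hx
    have h2 : dist (x i) 1 < 1/2 := lt_of_le_of_lt (by simpa using h) hx
    rw [Real.dist_eq, abs_lt] at h2
    constructor <;> linarith [h2.1, h2.2]
  have hpos : ∀ x ∈ ball (1 : Fin K → ℝ) (1/2), ∀ i, 0 < x i := fun x hx i => by
    linarith [(hball x hx i).1]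
  -- radius bound on C
  obtain ⟨R0, hR0⟩ := hC.isBounded.subset_closedBall 0
  set R := max R0 1 with hR
  have hR1 : (1:ℝ) ≤ R := le_max_right _ _
  have hRC : ∀ ρ ∈ C, ‖ρ‖ ≤ R := fun ρ hρ => le_trans (by simpa using hR0 hρ) (le_max_left _ _)
  -- rpow bound
  have h2pow : (0:ℝ) < 2 ^ (R + 1) := Real.rpow_pos_of_pos two_pos _
  have hrpow : ∀ x ∈ ball (1 : Fin K → ℝ) (1/2), ∀ i, ∀ t : ℝ, |t| ≤ R + 1 →
      x i ^ t ≤ 2 ^ (R + 1) := by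
    intro x hx i t ht
    have hxi := hball x hx i
    have hxpos : 0 < x i := by linarith [hxi.1]
    have hlog : |Real.log (x i)| ≤ Real.log 2 := by
      rw [abs_le]
      constructor
      · have h3 : Real.log (1/2) ≤ Real.log (x i) := Real.log_le_log (by norm_num) (le_of_lt hxi.1)
        rw [Real.log_div one_ne_zero two_ne_zero, Real.log_one] at h3
        linarith
      · have := Real.log_le_log hxpos (show x i ≤ 2 by linarith [hxi.2])
        linarith
    rw [Real.rpow_def_of_pos hxpos, Real.rpow_def_of_pos two_pos]
    apply Real.exp_le_exp.2
    have h4 : Real.log (x i) * t ≤ |Real.log (x i) * t| := le_abs_self _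
    have h5 : |Real.log (x i) * t| = |t| * |Real.log (x i)| := by rw [abs_mul, mul_comm]
    have h6 : |t| * |Real.log (x i)| ≤ (R+1) * Real.log 2 :=
      mul_le_mul ht hlog (abs_nonneg _) (by linarith)
    nlinarith [h4, h5, h6]
  -- bound for B on a compact set
  obtain ⟨M0, hM0⟩ := (isCompact_closedBall (0 : Fin K → ℝ) (2 ^ (R+1))).exists_bound_of_continuousOn
    (f := B) hBcont.continuousOn
  set M := max M0 0 with hM
  -- the derivative candidate
  set F' : (Fin K → ℝ) → (Fin K → ℝ) → (Fin K → ℝ) →L[ℝ] ℝ :=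
    fun x ρ => ((B (fun i => x i ^ ρ i)).flip (Pi.single k 1)).comp
      (ContinuousLinearMap.mul ℝ (Fin K → ℝ) (fun i => ρ i * x i ^ (ρ i - 1))) with hF'
  have hn : ∀ x ρ : Fin K → ℝ,
      ‖F' x ρ‖ ≤ ‖B (fun i => x i ^ ρ i)‖ * ‖(fun i => ρ i * x i ^ (ρ i - 1) : Fin K → ℝ)‖ := by
    intro x ρ
    calc ‖F' x ρ‖ ≤ ‖(B (fun i => x i ^ ρ i)).flip (Pi.single k 1)‖ *
          ‖ContinuousLinearMap.mul ℝ (Fin K → ℝ) (fun i => ρ i * x i ^ (ρ i - 1))‖ :=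
        opNorm_comp_le _ _
      _ ≤ (‖(B (fun i => x i ^ ρ i)).flip‖ * ‖(Pi.single k (1:ℝ) : Fin K → ℝ)‖) *
          ‖(fun i => ρ i * x i ^ (ρ i - 1) : Fin K → ℝ)‖ := by
        apply mul_le_mul (le_opNorm _ _) (opNorm_mul_apply_le _ _ _) (norm_nonneg _)
        positivity
      _ = ‖B (fun i => x i ^ ρ i)‖ * ‖(fun i => ρ i * x i ^ (ρ i - 1) : Fin K → ℝ)‖ := by
        rw [opNorm_flip, Pi.norm_single, norm_one, mul_one]
  -- a.e. bound over the ball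
  have haeC : ∀ᵐ ρ ∂ν, ρ ∈ C := by
    rw [ae_iff]
    exact hCnull
  have hbd : ∀ ρ ∈ C, ∀ x ∈ ball (1 : Fin K → ℝ) (1/2),
      ‖F' x ρ‖ ≤ M * (R * 2 ^ (R+1)) := by
    intro ρ hρ x hx
    have hRi : ∀ i, |ρ i| ≤ R := fun i =>
      le_trans (by simpa [Real.norm_eq_abs] using norm_le_pi_norm ρ i) (hRC ρ hρ)
    have hΦmem : (fun i => x i ^ ρ i : Fin K → ℝ) ∈ closedBall (0 : Fin K → ℝ) (2 ^ (R+1)) := by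
      rw [mem_closedBall_zero_iff]
      apply pi_norm_le_iff_of_nonneg h2pow.le |>.2
      intro i
      rw [Real.norm_eq_abs, abs_of_nonneg (Real.rpow_nonneg (hpos x hx i).le _)]
      exact hrpow x hx i (ρ i) (le_trans (hRi i) (by linarith))
    have hBb : ‖B (fun i => x i ^ ρ i)‖ ≤ M := le_trans (hM0 _ hΦmem) (le_max_left _ _)
    have hmb : ‖(fun i => ρ i * x i ^ (ρ i - 1) : Fin K → ℝ)‖ ≤ R * 2 ^ (R+1) := by
      apply pi_norm_le_iff_of_nonneg (by positivity) |>.2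
      intro i
      rw [Real.norm_eq_abs, abs_mul, abs_of_nonneg (Real.rpow_nonneg (hpos x hx i).le _)]
      apply mul_le_mul (hRi i) (hrpow x hx i _ ?_) (Real.rpow_nonneg (hpos x hx i).le _)
        (by linarith)
      calc |ρ i - 1| ≤ |ρ i| + 1 := by
            have := abs_sub_abs_le_abs_sub (ρ i) 1
            have h7 := abs_sub (ρ i) 1
            calc |ρ i - 1| ≤ |ρ i| + |(1:ℝ)| := abs_sub _ _
              _ = |ρ i| + 1 := by rw [abs_one]
        _ ≤ R + 1 := by linarith [hRi i]
    calc ‖F' x ρ‖ ≤ ‖B (fun i => x i ^ ρ i)‖ * ‖(fun i => ρ i * x i ^ (ρ i - 1) : Fin K → ℝ)‖ :=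
          hn x ρ
      _ ≤ M * (R * 2 ^ (R+1)) := by
          apply mul_le_mul hBb hmb (norm_nonneg _) (le_max_right _ _)
  -- measurability of F x
  have hFmeas : ∀ x ∈ ball (1 : Fin K → ℝ) (1/2),
      Continuous (fun ρ : Fin K → ℝ => fderiv ℝ V (fun i => x i ^ ρ i) (Pi.single k 1)) := by
    intro x hx
    have hφ : Continuous (fun ρ : Fin K → ℝ => (fun i => x i ^ ρ i : Fin K → ℝ)) := by
      apply continuous_pi
      intro i
      have : Continuous (fun t : ℝ => x i ^ t) :=
        continuous_iff_continuousAt.2 fun t => Real.continuousAt_const_rpow (hpos x hx i).ne'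
      exact this.comp (continuous_apply i)
    exact (hC1.continuous.comp hφ).clm_apply continuous_const
  -- F' at 1 simplification
  have h1 : ∀ ρ : Fin K → ℝ, F' 1 ρ = ((B 1).flip (Pi.single k 1)).comp
      (ContinuousLinearMap.mul ℝ (Fin K → ℝ) ρ) := by
    intro ρ
    simp only [hF', Pi.one_apply, Real.one_rpow, mul_one]
    rfl
  have hF'cont : Continuous (fun ρ : Fin K → ℝ => F' 1 ρ) := by
    have : (fun ρ : Fin K → ℝ => F' 1 ρ) = fun ρ => ((B 1).flip (Pi.single k 1)).comp
        (ContinuousLinearMap.mul ℝ (Fin K → ℝ) ρ) := funext h1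
    rw [this]
    exact continuous_const.clm_comp (ContinuousLinearMap.mul ℝ (Fin K → ℝ)).continuous
  -- differentiability
  have hdiff : ∀ ρ : Fin K → ℝ, ∀ x ∈ ball (1 : Fin K → ℝ) (1/2),
      HasFDerivAt (fun x : Fin K → ℝ => fderiv ℝ V (fun i => x i ^ ρ i) (Pi.single k 1))
        (F' x ρ) x := by
    intro ρ x hx
    have hΦ := phi_deriv13 ρ x (hpos x hx)
    have hDV : HasFDerivAt (fderiv ℝ V) (B (fun i => x i ^ ρ i)) (fun i => x i ^ ρ i) :=
      ((hC1.differentiable one_ne_zero) _).hasFDerivAt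
    exact ((ContinuousLinearMap.apply ℝ ℝ (Pi.single k 1)).hasFDerivAt).comp x (hDV.comp x hΦ)
  -- integrability of F at 1
  have hFone : (fun ρ : Fin K → ℝ => fderiv ℝ V (fun i => (1 : Fin K → ℝ) i ^ ρ i) (Pi.single k 1))
      = fun _ => fderiv ℝ V 1 (Pi.single k 1) := by
    funext ρ
    have : (fun i => (1 : Fin K → ℝ) i ^ ρ i) = (1 : Fin K → ℝ) := by
      funext i; simp [Real.one_rpow]
    rw [this]
  -- the main dominated-derivative step
  have hmain : HasFDerivAt
      (fun x : Fin K → ℝ => ∫ ρ, fderiv ℝ V (fun i => x i ^ ρ i) (Pi.single k 1) ∂ν)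
      (∫ ρ, F' 1 ρ ∂ν) 1 := by
    refine hasFDerivAt_integral_of_dominated_of_fderiv_le (s := ball (1 : Fin K → ℝ) (1/2))
      (bound := fun _ => M * (R * 2 ^ (R+1))) (F' := F') (ball_mem_nhds _ one_half_pos) ?_ ?_ ?_ ?_ ?_ ?_
    · filter_upwards [ball_mem_nhds (1 : Fin K → ℝ) (show (0:ℝ) < 1/2 by norm_num)] with x hx
      exact (hFmeas x hx).aestronglyMeasurable
    · rw [hFone]; exact integrable_const _
    · exact hF'cont.aestronglyMeasurable
    · filter_upwards [haeC] with ρ hρ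
      exact hbd ρ hρ
    · exact integrable_const _
    · filter_upwards with ρ
      exact hdiff ρ
  -- f k agrees with the integral near 1
  have heq : f k =ᶠ[nhds (1 : Fin K → ℝ)] fun x =>
      ∫ ρ, fderiv ℝ V (fun i => x i ^ ρ i) (Pi.single k 1) ∂ν := by
    filter_upwards [ball_mem_nhds (1 : Fin K → ℝ) (show (0:ℝ) < 1/2 by norm_num)] with x hx
    exact hf k x (hpos x hx)
  have hfk : HasFDerivAt (f k) (∫ ρ, F' 1 ρ ∂ν) 1 := hmain.congr_of_eventuallyEq heq
  rw [hfk.fderiv]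
  -- integrability of F' 1
  have hint : Integrable (fun ρ => F' 1 ρ) ν := by
    apply Integrable.mono' (integrable_const (M * (R * 2 ^ (R+1)))) hF'cont.aestronglyMeasurable
    filter_upwards [haeC] with ρ hρ
    exact hbd ρ hρ 1 (mem_ball_self (by norm_num))
  rw [ContinuousLinearMap.integral_apply hint]
  -- pointwise evaluation
  have heval : ∀ ρ : Fin K → ℝ, F' 1 ρ (Pi.single j 1)
      = ρ j * (B 1 (Pi.single j 1) (Pi.single k 1)) := by
    intro ρ
    rw [h1]
    have hmul : (ContinuousLinearMap.mul ℝ (Fin K → ℝ) ρ) (Pi.single j 1)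
        = ρ j • (Pi.single j 1 : Fin K → ℝ) := by
      ext i
      by_cases h : i = j
      · subst h; simp
      · simp [Pi.single_apply, h]
    rw [ContinuousLinearMap.comp_apply, hmul]
    simp [flip_apply]
  simp_rw [heval]
  rw [integral_mul_const]
  ring


/-- Remark on nonlinear random coefficients: ratios of cross-derivatives of the average
structural function at the vector of ones identify ratios of mean random exponents. -/
theorem stmt13 {K : ℕ} (hK : 0 < K)
    (ν : Measure (Fin K → ℝ)) [IsProbabilityMeasure ν]
    (hνc : ∃ C : Set (Fin K → ℝ), IsCompact C ∧ ν Cᶜ = 0)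
    (V : (Fin K → ℝ) → ℝ) (hV : ContDiff ℝ 2 V)
    (f : Fin K → (Fin K → ℝ) → ℝ)
    (hf : ∀ (k : Fin K) (x : Fin K → ℝ), (∀ i, 0 < x i) →
      f k x = ∫ ρ, fderiv ℝ V (fun i => x i ^ ρ i) (Pi.single k 1) ∂ν) :
    ∀ j k : Fin K,
      (fderiv ℝ (f k) 1 (Pi.single j 1) * ∫ ρ, ρ k ∂ν
        = fderiv ℝ (f j) 1 (Pi.single k 1) * ∫ ρ, ρ j ∂ν) ∧
      (fderiv ℝ (f j) 1 (Pi.single k 1) ≠ 0 → (∫ ρ, ρ k ∂ν) ≠ 0 →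
        fderiv ℝ (f k) 1 (Pi.single j 1) / fderiv ℝ (f j) 1 (Pi.single k 1)
          = (∫ ρ, ρ j ∂ν) / ∫ ρ, ρ k ∂ν) := by
  obtain ⟨C, hC, hCnull⟩ := hνc
  have aux : ∀ j k : Fin K, fderiv ℝ (f k) 1 (Pi.single j 1)
      = fderiv ℝ (fderiv ℝ V) 1 (Pi.single j 1) (Pi.single k 1) * ∫ ρ, ρ j ∂ν :=
    fun j k => aux13 ν C hC hCnull V hV f hf j k
  have hC1 : ContDiff ℝ 1 (fderiv ℝ V) := hV.fderiv_right (by norm_num)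
  have hsymm : ∀ v w, fderiv ℝ (fderiv ℝ V) 1 v w = fderiv ℝ (fderiv ℝ V) 1 w v :=
    second_derivative_symmetric
      (fun y => ((hV.differentiable (by norm_num)) y).hasFDerivAt)
      ((hC1.differentiable one_ne_zero 1).hasFDerivAt)
  intro j k
  have h1 : fderiv ℝ (f k) 1 (Pi.single j 1) * ∫ ρ, ρ k ∂ν
      = fderiv ℝ (f j) 1 (Pi.single k 1) * ∫ ρ, ρ j ∂ν := by
    rw [aux j k, aux k j, hsymm (Pi.single j 1) (Pi.single k 1)]
    ring
  refine ⟨h1, fun hb hk => ?_⟩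
  field_simp
  linarith [h1]
end
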